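/- arXiv:1911.04166 — 10 statements merged into one kernel-verified Lean document; each statement's English description precedes it below -/
import Mathlib

section
/- Let K be a compact subset of ℝⁿ and let f : K → ℝ and G : K → ℝⁿ be continuous functions. Then there exists a convex function F ∈ C¹(ℝⁿ) such that F = f on K and ∇F = G on K if and only if the 1-jet (f, G) satisfies: (C) f(x) ≥ f(y) + ⟨G(y), x − y⟩ for all x, y ∈ K, and (CW¹) whenever x, y ∈ K and f(x) = f(y) + ⟨G(y), x − y⟩, then G(x) = G(y). -/
/-!
Necessity: the gradient inequality of a differentiable convex function is (C), and if equality
holds at `x`, then `x` minimises `F - ⟪∇F y, ·⟫`, so `∇F x = ∇F y`.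

Sufficiency: by (C), (CW¹) and compactness, the defect `f x - f y - ⟪G y, x - y⟫` is bounded
below by `w ‖G x - G y‖²`, where `w` is convex, continuous, `w 0 = 0` and `w` is strictly
increasing on `[0, ∞)` (a scaled primitive of the monotone modulus of (CW¹)). Then
`ψ ξ = max_{y ∈ K} (⟪ξ, y⟫ - f y + w ‖ξ - G y‖²)` is continuous and strictly convex,
dominates `⟪ξ, x⟫ - f x` and equals it at `ξ = G x` for `x ∈ K`. Its conjugate
`F x = max_{ξ ∈ B} (⟪ξ, x⟫ - ψ ξ)` over a ball `B ⊇ G(K)` is convex; by strict convexity the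
maximiser `Ξ x` is unique, hence continuous in `x`, and it is a subgradient of `F` at every
point, so `F` is `C¹` with `∇F = Ξ`. For `x ∈ K` the maximiser is `G x` and `F x = f x`.
-/

open Set Filter InnerProductSpace

local notation "⟪" x ", " y "⟫" => @inner ℝ _ _ x y

section Subgradient

variable {E : Type*} [NormedAddCommGroup E] [InnerProductSpace ℝ E] {F : E → ℝ}

theorem convexOn_univ_of_forall_add_inner_le {Ξ : E → E}
    (h : ∀ x z, F x + ⟪Ξ x, z - x⟫ ≤ F z) : ConvexOn ℝ univ F := by
  refine ⟨convex_univ, fun x _ y _ a b ha hb hab => ?_⟩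
  set z := a • x + b • y
  have hzero : a * ⟪Ξ z, x - z⟫ + b * ⟪Ξ z, y - z⟫ = 0 := by
    have : a • (x - z) + b • (y - z) = 0 := by
      calc a • (x - z) + b • (y - z) = z - (a + b) • z := by module
        _ = 0 := by rw [hab, one_smul, sub_self]
    rw [← real_inner_smul_right, ← real_inner_smul_right, ← inner_add_right, this, inner_zero_right]
  have hx := mul_le_mul_of_nonneg_left (h z x) ha
  have hy := mul_le_mul_of_nonneg_left (h z y) hb
  simp only [smul_eq_mul]
  linear_combination hx + hy - hzero - F z * hab

variable [CompleteSpace E]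

theorem hasGradientAt_of_forall_add_inner_le {Ξ : E → E} {x : E}
    (hx : ∀ z, F x + ⟪Ξ x, z - x⟫ ≤ F z) (hz : ∀ z, F z + ⟪Ξ z, x - z⟫ ≤ F x)
    (hΞ : ContinuousAt Ξ x) : HasGradientAt F (Ξ x) x := by
  rw [hasGradientAt_iff_isLittleO, Asymptotics.isLittleO_iff]
  intro c hc
  filter_upwards [hΞ (Metric.closedBall_mem_nhds _ hc)] with z hzc
  have hlow := hx z
  have hup : F z - F x ≤ ⟪Ξ z, z - x⟫ := by
    have := hz z
    rw [← neg_sub, inner_neg_right] at this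
    linarith
  have hcs : ⟪Ξ z - Ξ x, z - x⟫ ≤ c * ‖z - x‖ :=
    (real_inner_le_norm _ _).trans
      (mul_le_mul_of_nonneg_right (mem_closedBall_iff_norm.1 hzc) (norm_nonneg _))
  rw [inner_sub_left] at hcs
  rw [Real.norm_eq_abs, abs_le]
  constructor <;> nlinarith [norm_nonneg (z - x)]

theorem contDiff_one_of_hasGradientAt {Ξ : E → E} (hF : ∀ x, HasGradientAt F (Ξ x) x)
    (hΞ : Continuous Ξ) : ContDiff ℝ 1 F :=
  contDiff_one_iff_hasFDerivAt.2
    ⟨fun x => toDual ℝ E (Ξ x), (toDual ℝ E).continuous.comp hΞ, fun x => (hF x).hasFDerivAt⟩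

theorem ConvexOn.add_inner_gradient_le (hF : ConvexOn ℝ univ F) {a : E}
    (hd : DifferentiableAt ℝ F a) (b : E) : F a + ⟪gradient F a, b - a⟫ ≤ F b := by
  set L : ℝ →ᵃ[ℝ] E := AffineMap.lineMap a b
  have hL0 : L 0 = a := AffineMap.lineMap_apply_zero a b
  have hL1 : L 1 = b := AffineMap.lineMap_apply_one a b
  have hφ : ConvexOn ℝ univ (F ∘ L) := by simpa using hF.comp_affineMap L
  have hF' : HasFDerivAt F (toDual ℝ E (gradient F a)) (L 0) := by
    rw [hL0]
    exact hd.hasGradientAt.hasFDerivAt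
  have hderiv : HasDerivAt (F ∘ L) ⟪gradient F a, b - a⟫ 0 :=
    hF'.comp_hasDerivAt 0 (AffineMap.hasDerivAt_lineMap (𝕜 := ℝ))
  have := hφ.le_slope_of_hasDerivAt (mem_univ 0) (mem_univ 1) zero_lt_one hderiv
  rw [slope_def_field, Function.comp_apply, Function.comp_apply, hL0, hL1, sub_zero,
    div_one] at this
  linarith

theorem gradient_eq_of_forall_add_inner_le {x p : E} (hd : DifferentiableAt ℝ F x)
    (h : ∀ z, F x + ⟪p, z - x⟫ ≤ F z) : gradient F x = p := by
  have hmin : IsLocalMin (fun z => F z - ⟪p, z⟫) x := Eventually.of_forall fun z => by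
    have := h z
    rw [inner_sub_right] at this
    linarith
  have hderiv : HasFDerivAt (fun z => F z - ⟪p, z⟫) (toDual ℝ E (gradient F x - p)) x := by
    rw [map_sub]
    exact hd.hasGradientAt.hasFDerivAt.sub (toDual ℝ E p).hasFDerivAt
  have := hmin.hasFDerivAt_eq_zero hderiv
  rwa [LinearIsometryEquiv.map_eq_zero_iff, sub_eq_zero] at this

theorem ConvexOn.gradient_eq_of_eq_add_inner_gradient (hF : ConvexOn ℝ univ F)
    (hd : Differentiable ℝ F) {x y : E} (h : F x = F y + ⟪gradient F y, x - y⟫) :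
    gradient F x = gradient F y :=
  gradient_eq_of_forall_add_inner_le (hd x) fun z => by
    have hz := hF.add_inner_gradient_le (hd y) z
    have : ⟪gradient F y, z - y⟫ = ⟪gradient F y, z - x⟫ + ⟪gradient F y, x - y⟫ := by
      rw [← inner_add_right, sub_add_sub_cancel]
    linarith

end Subgradient

section SupOn

variable {α β : Type*} {K : Set β} {g : β → α → ℝ} {x : α}

noncomputable def supOn (K : Set β) (g : β → α → ℝ) (x : α) : ℝ := sSup ((g · x) '' K)

theorem supOn_le (hne : K.Nonempty) {c : ℝ} (h : ∀ y ∈ K, g y x ≤ c) : supOn K g x ≤ c :=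
  csSup_le (hne.image _) (forall_mem_image.2 h)

variable [TopologicalSpace β]

theorem le_supOn (hK : IsCompact K) (hg : ContinuousOn (g · x) K) {y : β} (hy : y ∈ K) :
    g y x ≤ supOn K g x :=
  le_csSup (hK.bddAbove_image hg) (mem_image_of_mem _ hy)

theorem exists_supOn_eq (hK : IsCompact K) (hne : K.Nonempty) (hg : ContinuousOn (g · x) K) :
    ∃ y ∈ K, supOn K g x = g y x :=
  hK.exists_sSup_image_eq hne hg

theorem continuous_supOn [TopologicalSpace α] (hK : IsCompact K)
    (hg : ContinuousOn (fun p : β × α => g p.1 p.2) (K ×ˢ univ)) : Continuous (supOn K g) := by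
  have : CompactSpace K := isCompact_iff_compactSpace.1 hK
  have hsup : supOn K g = fun x => sSup ((fun x (y : K) => g y x) x '' univ) := by
    funext x
    rw [supOn, image_univ, image_eq_range]
  rw [hsup]
  exact isCompact_univ.continuous_sSup <| hg.comp_continuous
    ((continuous_subtype_val.comp continuous_snd).prodMk continuous_fst)
    fun p => ⟨p.2.2, mem_univ _⟩

theorem strictConvexOn_supOn [AddCommGroup α] [Module ℝ α] {C : Set α} (hK : IsCompact K)
    (hne : K.Nonempty) (hg : ∀ x, ContinuousOn (g · x) K)
    (hsc : ∀ y ∈ K, StrictConvexOn ℝ C (g y)) : StrictConvexOn ℝ C (supOn K g) := by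
  obtain ⟨y₀, hy₀⟩ := hne
  refine ⟨(hsc y₀ hy₀).1, fun ξ₁ h₁ ξ₂ h₂ hξ a b ha hb hab => ?_⟩
  obtain ⟨y, hy, hmax⟩ := exists_supOn_eq hK ⟨y₀, hy₀⟩ (hg (a • ξ₁ + b • ξ₂))
  rw [hmax]
  calc g y (a • ξ₁ + b • ξ₂) < a • g y ξ₁ + b • g y ξ₂ := (hsc y hy).2 h₁ h₂ hξ ha hb hab
    _ ≤ a • supOn K g ξ₁ + b • supOn K g ξ₂ := by
      gcongr <;> exact le_supOn hK (hg _) hy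

end SupOn

theorem IsCompact.exists_pos_forall_dist_lt {α : Type*} [PseudoMetricSpace α] {C : Set α}
    {φ : α → ℝ} {ξ₀ : α} (hC : IsCompact C) (hφ : ContinuousOn φ C)
    (huniq : ∀ ξ ∈ C, φ ξ₀ ≤ φ ξ → ξ = ξ₀) {ε : ℝ} (hε : 0 < ε) :
    ∃ η > 0, ∀ ξ ∈ C, φ ξ₀ - η < φ ξ → dist ξ ξ₀ < ε := by
  set A := C ∩ {ξ | ε ≤ dist ξ ξ₀}
  have hA : IsCompact A :=
    hC.inter_right (isClosed_le continuous_const (continuous_id.dist continuous_const))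
  have hlt : ∀ ξ ∈ A, -φ ξ₀ < -φ ξ := fun ξ hξ => by
    by_contra! h
    have hd : ε ≤ dist ξ ξ₀ := hξ.2
    rw [huniq ξ hξ.1 (by linarith), dist_self] at hd
    linarith
  obtain ⟨a, ha, hbound⟩ := hA.exists_forall_le' (hφ.mono inter_subset_left).neg hlt
  refine ⟨φ ξ₀ + a, by linarith, fun ξ hξ hφξ => ?_⟩
  by_contra! hd
  have := hbound ξ ⟨hξ, hd⟩
  rw [Pi.neg_apply] at this
  linarith

section FenchelConjugateOn

variable {E : Type*} [NormedAddCommGroup E] [InnerProductSpace ℝ E] {C : Set E} {ψ : E → ℝ}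

noncomputable def fenchelConjugateOn (C : Set E) (ψ : E → ℝ) : E → ℝ :=
  supOn C fun ξ x => ⟪ξ, x⟫ - ψ ξ

theorem ContinuousOn.inner_const_sub (hψ : ContinuousOn ψ C) (x : E) :
    ContinuousOn (fun ξ => ⟪ξ, x⟫ - ψ ξ) C :=
  (continuous_id.inner continuous_const).continuousOn.sub hψ

theorem inner_sub_le_fenchelConjugateOn (hC : IsCompact C) (hψ : ContinuousOn ψ C) {ξ : E}
    (hξ : ξ ∈ C) (x : E) : ⟪ξ, x⟫ - ψ ξ ≤ fenchelConjugateOn C ψ x :=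
  le_supOn (g := fun ξ x => ⟪ξ, x⟫ - ψ ξ) hC (hψ.inner_const_sub x) hξ

theorem exists_fenchelConjugateOn_eq (hC : IsCompact C) (hne : C.Nonempty)
    (hψ : ContinuousOn ψ C) (x : E) : ∃ ξ ∈ C, fenchelConjugateOn C ψ x = ⟪ξ, x⟫ - ψ ξ :=
  exists_supOn_eq hC hne (hψ.inner_const_sub x)

theorem fenchelConjugateOn_add_inner_le (hC : IsCompact C) (hψ : ContinuousOn ψ C) {ξ x : E}
    (hξ : ξ ∈ C) (hx : fenchelConjugateOn C ψ x = ⟪ξ, x⟫ - ψ ξ) (z : E) :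
    fenchelConjugateOn C ψ x + ⟪ξ, z - x⟫ ≤ fenchelConjugateOn C ψ z := by
  have := inner_sub_le_fenchelConjugateOn hC hψ hξ z
  rw [hx, inner_sub_right]
  linarith

theorem convexOn_fenchelConjugateOn (hC : IsCompact C) (hne : C.Nonempty)
    (hψ : ContinuousOn ψ C) : ConvexOn ℝ univ (fenchelConjugateOn C ψ) := by
  choose Ξ hΞC hΞ using exists_fenchelConjugateOn_eq hC hne hψ
  exact convexOn_univ_of_forall_add_inner_le fun x =>
    fenchelConjugateOn_add_inner_le hC hψ (hΞC x) (hΞ x)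

namespace StrictConvexOn

variable (hsc : StrictConvexOn ℝ C ψ) (hC : IsCompact C) (hψ : ContinuousOn ψ C)
include hsc hC hψ

theorem eq_of_fenchelConjugateOn_eq {x ξ₁ ξ₂ : E} (h₁ : ξ₁ ∈ C) (h₂ : ξ₂ ∈ C)
    (e₁ : fenchelConjugateOn C ψ x = ⟪ξ₁, x⟫ - ψ ξ₁)
    (e₂ : fenchelConjugateOn C ψ x = ⟪ξ₂, x⟫ - ψ ξ₂) : ξ₁ = ξ₂ := by
  by_contra hne
  have hmid := inner_sub_le_fenchelConjugateOn hC hψ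
    (hsc.1 h₁ h₂ one_half_pos.le one_half_pos.le (add_halves 1)) x
  have hlt := hsc.2 h₁ h₂ hne one_half_pos one_half_pos (add_halves 1)
  rw [inner_add_left, real_inner_smul_left, real_inner_smul_left] at hmid
  simp only [smul_eq_mul] at hlt
  linarith

theorem continuous_of_fenchelConjugateOn_eq {Ξ : E → E} (hΞC : ∀ x, Ξ x ∈ C)
    (hΞ : ∀ x, fenchelConjugateOn C ψ x = ⟪Ξ x, x⟫ - ψ (Ξ x)) : Continuous Ξ := by
  obtain ⟨M, hM⟩ := hC.isBounded.exists_norm_le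
  have hinner : ∀ ξ ∈ C, ∀ v, |⟪ξ, v⟫| ≤ M * ‖v‖ := fun ξ hξ v =>
    (abs_real_inner_le_norm ξ v).trans (mul_le_mul_of_nonneg_right (hM ξ hξ) (norm_nonneg v))
  rw [Metric.continuous_iff]
  intro x ε hε
  have huniq : ∀ ξ ∈ C, ⟪Ξ x, x⟫ - ψ (Ξ x) ≤ ⟪ξ, x⟫ - ψ ξ → ξ = Ξ x := fun ξ hξ hle =>
    hsc.eq_of_fenchelConjugateOn_eq hC hψ hξ (hΞC x)
      (le_antisymm ((hΞ x).trans_le hle) (inner_sub_le_fenchelConjugateOn hC hψ hξ x)) (hΞ x)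
  obtain ⟨η, hη, hnear⟩ := hC.exists_pos_forall_dist_lt (hψ.inner_const_sub x) huniq hε
  have hM0 : 0 ≤ M := (norm_nonneg _).trans (hM _ (hΞC x))
  refine ⟨η / (2 * M + 1), by positivity, fun z hz => hnear (Ξ z) (hΞC z) ?_⟩
  rw [dist_eq_norm] at hz
  -- `Ξ z` is a `2 M ‖z - x‖`-maximiser of the objective at `x`
  have h₁ := fenchelConjugateOn_add_inner_le hC hψ (hΞC x) (hΞ x) z
  have h₂ := hinner _ (hΞC x) (z - x)
  have h₃ := hinner _ (hΞC z) (z - x)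
  have h₄ : (2 * M + 1) * ‖z - x‖ < η := by rwa [lt_div_iff₀' (by positivity)] at hz
  rw [abs_le] at h₂ h₃
  have e : ⟪Ξ z, x⟫ = ⟪Ξ z, z⟫ - ⟪Ξ z, z - x⟫ := by rw [inner_sub_right]; ring
  rw [e, ← hΞ x]
  nlinarith [hΞ z, norm_nonneg (z - x)]

variable [CompleteSpace E]

theorem hasGradientAt_fenchelConjugateOn {ξ x : E} (hξ : ξ ∈ C)
    (hx : fenchelConjugateOn C ψ x = ⟪ξ, x⟫ - ψ ξ) :
    HasGradientAt (fenchelConjugateOn C ψ) ξ x := by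
  choose Ξ hΞC hΞ using exists_fenchelConjugateOn_eq hC ⟨ξ, hξ⟩ hψ
  rw [hsc.eq_of_fenchelConjugateOn_eq hC hψ hξ (hΞC x) hx (hΞ x)]
  exact hasGradientAt_of_forall_add_inner_le
    (fenchelConjugateOn_add_inner_le hC hψ (hΞC x) (hΞ x))
    (fun z => fenchelConjugateOn_add_inner_le hC hψ (hΞC z) (hΞ z) x)
    (hsc.continuous_of_fenchelConjugateOn_eq hC hψ hΞC hΞ).continuousAt

theorem contDiff_fenchelConjugateOn (hne : C.Nonempty) :
    ContDiff ℝ 1 (fenchelConjugateOn C ψ) := by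
  choose Ξ hΞC hΞ using exists_fenchelConjugateOn_eq hC hne hψ
  exact contDiff_one_of_hasGradientAt
    (fun x => hsc.hasGradientAt_fenchelConjugateOn hC hψ (hΞC x) (hΞ x))
    (hsc.continuous_of_fenchelConjugateOn_eq hC hψ hΞC hΞ)

end StrictConvexOn

end FenchelConjugateOn

theorem Monotone.exists_convexOn_strictMonoOn_le {ω : ℝ → ℝ} (hω : Monotone ω) (hω₀ : 0 ≤ ω 0)
    (hpos : ∀ s, 0 < s → 0 < ω s) {D : ℝ} (hD : 0 < D) :
    ∃ w : ℝ → ℝ, Continuous w ∧ ConvexOn ℝ univ w ∧ StrictMonoOn w (Ici 0) ∧ w 0 = 0 ∧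
      ∀ s ∈ Icc 0 D, w s ≤ ω s := by
  have hint : ∀ a b, IntervalIntegrable ω MeasureTheory.volume a b :=
    fun _ _ => hω.intervalIntegrable
  set w : ℝ → ℝ := fun s => (∫ t in (0 : ℝ)..s, ω t) / D
  have hw : ∀ a b, w b - w a = (∫ t in a..b, ω t) / D := fun a b => by
    rw [← sub_div, intervalIntegral.integral_interval_sub_left (hint 0 b) (hint 0 a)]
  have hupper : ∀ a b, a ≤ b → ∫ t in a..b, ω t ≤ (b - a) * ω b := fun a b hab => by
    simpa using intervalIntegral.integral_mono_on hab (hint a b) intervalIntegrable_const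
      fun t ht => hω ht.2
  have hlower : ∀ a b, a ≤ b → (b - a) * ω a ≤ ∫ t in a..b, ω t := fun a b hab => by
    simpa using intervalIntegral.integral_mono_on hab intervalIntegrable_const (hint a b)
      fun t ht => hω ht.1
  refine ⟨w, (intervalIntegral.continuous_primitive hint 0).div_const D,
    convexOn_of_slope_mono_adjacent convex_univ fun {x y z} _ _ hxy hyz => ?_,
    fun a ha b _ hab => ?_, by simp [w], fun s hs => ?_⟩
  · -- both slopes are compared with `ω y / D`
    rw [hw, hw, div_div, div_div, div_le_div_iff₀ (by nlinarith) (by nlinarith)]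
    have h₁ := hupper x y hxy.le
    have h₂ := hlower y z hyz.le
    have h₃ := mul_le_mul_of_nonneg_right h₁ (mul_nonneg hD.le (sub_pos.2 hyz).le)
    have h₄ := mul_le_mul_of_nonneg_right h₂ (mul_nonneg hD.le (sub_pos.2 hxy).le)
    nlinarith
  · rw [← sub_pos, hw]
    exact div_pos (intervalIntegral.intervalIntegral_pos_of_pos_on (hint a b)
      (fun t ht => hpos t ((mem_Ici.1 ha).trans_lt ht.1)) hab) hD
  · have hωs : 0 ≤ ω s := hω₀.trans (hω hs.1)
    have := hupper 0 s hs.1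
    rw [div_le_iff₀ hD]
    nlinarith [hs.2]

theorem ConvexOn.strictConvexOn_comp_norm_sub_sq {E : Type*} [NormedAddCommGroup E]
    [InnerProductSpace ℝ E] {w : ℝ → ℝ} (hw : ConvexOn ℝ univ w) (hw' : StrictMonoOn w (Ici 0))
    (c : E) : StrictConvexOn ℝ univ fun ξ => w (‖ξ - c‖ ^ 2) := by
  have hsq : StrictConvexOn ℝ univ fun ξ : E => ‖ξ - c‖ ^ 2 := by
    refine (strongConvexOn_iff_convex (m := 2)).2 ?_ |>.strictConvexOn two_pos
    have : (fun ξ : E => ‖ξ - c‖ ^ 2 - 2 / 2 * ‖ξ‖ ^ 2) =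
        fun ξ => (innerₛₗ ℝ (-(2 : ℝ) • c)) ξ + ‖c‖ ^ 2 := by
      funext ξ
      rw [norm_sub_sq_real, innerₛₗ_apply_apply, real_inner_smul_left, real_inner_comm ξ c]
      ring
    rw [this]
    exact ((innerₛₗ ℝ _).convexOn convex_univ).add_const _
  refine ⟨convex_univ, fun ξ₁ _ ξ₂ _ hξ a b ha hb hab => ?_⟩
  calc w (‖a • ξ₁ + b • ξ₂ - c‖ ^ 2) < w (a • ‖ξ₁ - c‖ ^ 2 + b • ‖ξ₂ - c‖ ^ 2) :=
        hw' (mem_Ici.2 (by positivity)) (mem_Ici.2 (by simp only [smul_eq_mul]; positivity))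
          (hsq.2 trivial trivial hξ ha hb hab)
    _ ≤ a • w (‖ξ₁ - c‖ ^ 2) + b • w (‖ξ₂ - c‖ ^ 2) := hw.2 trivial trivial ha.le hb.le hab

theorem ContinuousOn.norm_sub_sq_prod {α E : Type*} [TopologicalSpace α]
    [SeminormedAddCommGroup E] {K : Set α} {G : α → E} (hG : ContinuousOn G K) :
    ContinuousOn (fun p : α × α => ‖G p.1 - G p.2‖ ^ 2) (K ×ˢ K) :=
  ((hG.comp continuousOn_fst fun _ hp => hp.1).sub
    (hG.comp continuousOn_snd fun _ hp => hp.2)).norm.pow 2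

section Jet

variable {E : Type*} [NormedAddCommGroup E] [InnerProductSpace ℝ E] {K : Set E} {f : E → ℝ}
  {G : E → E}

/-- `1` keeps the infimum positive when no pair qualifies (`sInf ∅ = 0`). -/
def jetDefects (K : Set E) (f : E → ℝ) (G : E → E) (s : ℝ) : Set ℝ :=
  insert 1 ((fun p : E × E => f p.1 - f p.2 - ⟪G p.2, p.1 - p.2⟫) ''
    {p ∈ K ×ˢ K | s ≤ ‖G p.1 - G p.2‖ ^ 2})

noncomputable def jetModulus (K : Set E) (f : E → ℝ) (G : E → E) (s : ℝ) : ℝ :=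
  sInf (jetDefects K f G s)

variable (hC : ∀ x ∈ K, ∀ y ∈ K, f x ≥ f y + ⟪G y, x - y⟫)
include hC

theorem nonneg_of_mem_jetDefects {s t : ℝ} (ht : t ∈ jetDefects K f G s) : 0 ≤ t := by
  rcases ht with rfl | ⟨p, ⟨⟨hx, hy⟩, -⟩, rfl⟩
  · exact zero_le_one
  · linarith [hC p.1 hx p.2 hy]

theorem bddBelow_jetDefects (s : ℝ) : BddBelow (jetDefects K f G s) :=
  ⟨0, fun _ => nonneg_of_mem_jetDefects hC⟩

theorem jetModulus_nonneg (s : ℝ) : 0 ≤ jetModulus K f G s :=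
  le_csInf (insert_nonempty _ _) fun _ => nonneg_of_mem_jetDefects hC

theorem jetModulus_monotone : Monotone (jetModulus K f G) := fun _ _ hst =>
  csInf_le_csInf (bddBelow_jetDefects hC _) (insert_nonempty _ _) <|
    insert_subset_insert <| image_mono fun _ hp => ⟨hp.1, hst.trans hp.2⟩

theorem jetModulus_le {x y : E} (hx : x ∈ K) (hy : y ∈ K) {s : ℝ}
    (hs : s ≤ ‖G x - G y‖ ^ 2) : jetModulus K f G s ≤ f x - f y - ⟪G y, x - y⟫ :=
  csInf_le (bddBelow_jetDefects hC s) (mem_insert_of_mem _ ⟨(x, y), ⟨⟨hx, hy⟩, hs⟩, rfl⟩)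

theorem jetModulus_pos (hK : IsCompact K) (hf : ContinuousOn f K) (hG : ContinuousOn G K)
    (hCW : ∀ x ∈ K, ∀ y ∈ K, f x = f y + ⟪G y, x - y⟫ → G x = G y) {s : ℝ} (hs : 0 < s) :
    0 < jetModulus K f G s := by
  set S := {p ∈ K ×ˢ K | s ≤ ‖G p.1 - G p.2‖ ^ 2}
  have hS : IsCompact S := (hK.prod hK).of_isClosed_subset
    (hG.norm_sub_sq_prod.preimage_isClosed_of_isClosed (hK.prod hK).isClosed isClosed_Ici)
    (sep_subset _ _)
  have hb : ContinuousOn (fun p : E × E => f p.1 - f p.2 - ⟪G p.2, p.1 - p.2⟫) S :=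
    (((hf.comp continuousOn_fst fun _ hp => hp.1).sub
      (hf.comp continuousOn_snd fun _ hp => hp.2)).sub
      ((hG.comp continuousOn_snd fun _ hp => hp.2).inner
        (continuous_fst.sub continuous_snd).continuousOn)).mono (sep_subset _ _)
  have hbpos : ∀ p ∈ S, 0 < f p.1 - f p.2 - ⟪G p.2, p.1 - p.2⟫ := by
    rintro ⟨x, y⟩ ⟨⟨hx, hy⟩, hxy⟩
    refine (sub_nonneg.2 (by linarith [hC x hx y hy])).lt_of_ne fun h => ?_
    rw [hCW x hx y hy (by linarith), sub_self, norm_zero] at hxy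
    linarith
  obtain ⟨a, ha, hmin⟩ := hS.exists_forall_le' hb hbpos
  refine (lt_min zero_lt_one ha).trans_le (le_csInf (insert_nonempty _ _) ?_)
  rintro t (rfl | ⟨p, hp, rfl⟩)
  · exact min_le_left _ _
  · exact (min_le_right _ _).trans (hmin p hp)

end Jet

section Extension

variable {E : Type*} [NormedAddCommGroup E] [InnerProductSpace ℝ E] {K : Set E} {f : E → ℝ}
  {G : E → E}

theorem exists_strictConvexOn_dual_of_jet (hK : IsCompact K) (hKne : K.Nonempty)
    (hf : ContinuousOn f K) (hG : ContinuousOn G K)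
    (hC : ∀ x ∈ K, ∀ y ∈ K, f x ≥ f y + ⟪G y, x - y⟫)
    (hCW : ∀ x ∈ K, ∀ y ∈ K, f x = f y + ⟪G y, x - y⟫ → G x = G y) :
    ∃ ψ : E → ℝ, Continuous ψ ∧ StrictConvexOn ℝ univ ψ ∧
      (∀ x ∈ K, ∀ ξ, ⟪ξ, x⟫ - f x ≤ ψ ξ) ∧ ∀ x ∈ K, ψ (G x) ≤ ⟪G x, x⟫ - f x := by
  obtain ⟨D₀, hD₀⟩ := (hK.prod hK).exists_bound_of_continuousOn hG.norm_sub_sq_prod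
  obtain ⟨w, hwc, hwconv, hwmono, hw0, hwω⟩ :=
    (jetModulus_monotone hC).exists_convexOn_strictMonoOn_le (jetModulus_nonneg hC 0)
      (fun _ hs => jetModulus_pos hC hK hf hG hCW hs) (lt_max_of_lt_right (b := D₀) one_pos)
  have hw : ∀ x ∈ K, ∀ y ∈ K, w (‖G x - G y‖ ^ 2) ≤ f x - f y - ⟪G y, x - y⟫ :=
    fun x hx y hy => (hwω _ ⟨by positivity, (le_abs_self _).trans
      ((hD₀ (x, y) ⟨hx, hy⟩).trans (le_max_left _ _))⟩).trans (jetModulus_le hC hx hy le_rfl)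
  set g : E → E → ℝ := fun y ξ => ⟪ξ, y⟫ - f y + w (‖ξ - G y‖ ^ 2)
  have hg : ContinuousOn (fun p : E × E => g p.1 p.2) (K ×ˢ univ) :=
    ((continuous_snd.inner continuous_fst).continuousOn.sub
      (hf.comp continuousOn_fst fun _ hp => hp.1)).add
      (hwc.comp_continuousOn ((continuous_snd.continuousOn.sub
        (hG.comp continuousOn_fst fun _ hp => hp.1)).norm.pow 2))
  have hgK : ∀ ξ, ContinuousOn (g · ξ) K := fun ξ =>
    hg.comp (continuous_id.prodMk continuous_const).continuousOn fun _ hy => ⟨hy, mem_univ _⟩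
  refine ⟨supOn K g, continuous_supOn hK hg, strictConvexOn_supOn hK hKne hgK fun y _ => ?_,
    fun x hx ξ => ?_, fun x hx => supOn_le hKne fun y hy => ?_⟩
  · have hlin : ConvexOn ℝ univ fun ξ => ⟪ξ, y⟫ - f y :=
      ⟨convex_univ, fun ξ₁ _ ξ₂ _ a b _ _ hab => le_of_eq <| by
        simp only [smul_eq_mul, inner_add_left, real_inner_smul_left]
        linear_combination f y * hab⟩
    exact hlin.add_strictConvexOn (hwconv.strictConvexOn_comp_norm_sub_sq hwmono (G y))
  · have hw₀ : 0 ≤ w (‖ξ - G x‖ ^ 2) :=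
      hw0 ▸ hwmono.monotoneOn (mem_Ici.2 le_rfl) (mem_Ici.2 (by positivity)) (by positivity)
    exact (le_add_of_nonneg_right hw₀).trans (le_supOn hK (hgK ξ) hx)
  · have := hw y hy x hx
    rw [norm_sub_rev, inner_sub_right] at this
    simp only [g]
    linarith

theorem exists_convex_contDiff_extension_of_dual [CompleteSpace E] {C : Set E} {ψ : E → ℝ}
    (hC : IsCompact C) (hne : C.Nonempty) (hψ : ContinuousOn ψ C)
    (hsc : StrictConvexOn ℝ C ψ) (hGC : ∀ x ∈ K, G x ∈ C)
    (hle : ∀ x ∈ K, ∀ ξ ∈ C, ⟪ξ, x⟫ - f x ≤ ψ ξ) (hψG : ∀ x ∈ K, ψ (G x) ≤ ⟪G x, x⟫ - f x) :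
    ∃ F : E → ℝ, ConvexOn ℝ univ F ∧ ContDiff ℝ 1 F ∧
      (∀ x ∈ K, F x = f x) ∧ (∀ x ∈ K, gradient F x = G x) := by
  set F := fenchelConjugateOn C ψ
  have hFf : ∀ x ∈ K, F x = f x := fun x hx => le_antisymm
    (supOn_le hne fun ξ hξ => by linarith [hle x hx ξ hξ])
    (by linarith [inner_sub_le_fenchelConjugateOn hC hψ (hGC x hx) x, hψG x hx])
  refine ⟨F, convexOn_fenchelConjugateOn hC hne hψ, hsc.contDiff_fenchelConjugateOn hC hψ hne,
    hFf, fun x hx => (hsc.hasGradientAt_fenchelConjugateOn hC hψ (hGC x hx) ?_).gradient⟩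
  linarith [hFf x hx, hψG x hx, hle x hx _ (hGC x hx)]

theorem exists_convex_contDiff_extension_of_jet [ProperSpace E] (hK : IsCompact K)
    (hf : ContinuousOn f K) (hG : ContinuousOn G K)
    (hC : ∀ x ∈ K, ∀ y ∈ K, f x ≥ f y + ⟪G y, x - y⟫)
    (hCW : ∀ x ∈ K, ∀ y ∈ K, f x = f y + ⟪G y, x - y⟫ → G x = G y) :
    ∃ F : E → ℝ, ConvexOn ℝ univ F ∧ ContDiff ℝ 1 F ∧
      (∀ x ∈ K, F x = f x) ∧ (∀ x ∈ K, gradient F x = G x) := by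
  rcases K.eq_empty_or_nonempty with rfl | ⟨x₀, hx₀⟩
  · exact ⟨0, convexOn_const 0 convex_univ, contDiff_const, by simp, by simp⟩
  obtain ⟨ψ, hψc, hψsc, hψle, hψG⟩ :=
    exists_strictConvexOn_dual_of_jet hK ⟨x₀, hx₀⟩ hf hG hC hCW
  obtain ⟨M, hM⟩ := (hK.image_of_continuousOn hG).isBounded.exists_norm_le
  have hGC : ∀ x ∈ K, G x ∈ Metric.closedBall 0 M := fun x hx =>
    mem_closedBall_zero_iff.2 (hM _ (mem_image_of_mem G hx))
  exact exists_convex_contDiff_extension_of_dual (isCompact_closedBall 0 M) ⟨_, hGC x₀ hx₀⟩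
    hψc.continuousOn (hψsc.subset (subset_univ _) (convex_closedBall 0 M)) hGC
    (fun x hx ξ _ => hψle x hx ξ) hψG

end Extension

/-- Convex C¹ extension of 1-jets from compact subsets of ℝⁿ. -/
theorem convex_C1_extension_compact_Rn (n : ℕ)
    (K : Set (EuclideanSpace ℝ (Fin n))) (hK : IsCompact K)
    (f : EuclideanSpace ℝ (Fin n) → ℝ) (G : EuclideanSpace ℝ (Fin n) → EuclideanSpace ℝ (Fin n))
    (hf : ContinuousOn f K) (hG : ContinuousOn G K) :
    (∃ F : EuclideanSpace ℝ (Fin n) → ℝ,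
      ConvexOn ℝ univ F ∧ ContDiff ℝ 1 F ∧
      (∀ x ∈ K, F x = f x) ∧ (∀ x ∈ K, gradient F x = G x)) ↔
    ((∀ x ∈ K, ∀ y ∈ K, f x ≥ f y + ⟪G y, x - y⟫) ∧
     (∀ x ∈ K, ∀ y ∈ K, f x = f y + ⟪G y, x - y⟫ → G x = G y)) := by
  refine ⟨fun ⟨F, hconv, hF, hFf, hFG⟩ => ?_, fun ⟨hC, hCW⟩ =>
    exists_convex_contDiff_extension_of_jet hK hf hG hC hCW⟩
  have hd : Differentiable ℝ F := hF.differentiable one_ne_zero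
  refine ⟨fun x hx y hy => ?_, fun x hx y hy h => ?_⟩
  · rw [← hFf x hx, ← hFf y hy, ← hFG y hy]
    exact hconv.add_inner_gradient_le (hd y) x
  · rw [← hFf x hx, ← hFf y hy, ← hFG y hy] at h
    rw [← hFG x hx, ← hFG y hy]
    exact hconv.gradient_eq_of_eq_add_inner_gradient hd h
end

section
/- Let X be a real Hilbert space and F : X → ℝ a convex differentiable function whose gradient ∇F is uniformly continuous on every bounded subset of X. Let B be a bounded subset of X. Then for all sequences (x_n), (y_n) in B, if F(x_n) − F(y_n) − ⟨∇F(y_n), x_n − y_n⟩ → 0 as n → ∞, then ∇F(x_n) − ∇F(y_n) → 0 in X. (That is, the restriction of the 1-jet (F, ∇F) to any bounded set satisfies condition (SCW¹).) -/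
/-!
For a convex differentiable `f`, adding the gradient inequalities at `y` (towards `z`) and at `z`
(towards `x`) bounds the Bregman divergence `D(x, y) = f x - f y - ⟪∇f y, x - y⟫` from below by
`⟪∇f y - ∇f z, z - x⟫` for every `z`. Taking `z` at distance `δ` from `x`, in the direction of
`∇f y - ∇f x`, gives `δ (‖∇f x - ∇f y‖ - ‖∇f x - ∇f z‖) ≤ D(x, y)`. Uniform continuity of `∇f` on
the bounded set `cthickening 1 B` makes `‖∇f x - ∇f z‖ < ε / 2` for a fixed small `δ`, so
`‖∇f xₙ - ∇f yₙ‖ < ε` as soon as `D(xₙ, yₙ) < δ ε / 2`.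
-/

open Set Filter

local notation "⟪" x ", " y "⟫" => @inner ℝ _ _ x y

theorem NormedSpace.norm_normalize_le_one {V : Type*} [NormedAddCommGroup V] [NormedSpace ℝ V]
    (v : V) : ‖NormedSpace.normalize v‖ ≤ 1 := by
  rw [NormedSpace.normalize, norm_smul, norm_inv, norm_norm]
  exact inv_mul_le_one

theorem real_inner_normalize_self {X : Type*} [NormedAddCommGroup X] [InnerProductSpace ℝ X]
    (v : X) : ⟪v, NormedSpace.normalize v⟫ = ‖v‖ := by
  rw [NormedSpace.normalize, real_inner_smul_right, real_inner_self_eq_norm_sq]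
  rcases eq_or_ne ‖v‖ 0 with hv | hv
  · simp [hv]
  · field_simp

theorem ConvexOn.add_apply_sub_le {E : Type*} [NormedAddCommGroup E] [NormedSpace ℝ E]
    {s : Set E} {f : E → ℝ} {f' : E →L[ℝ] ℝ} {a b : E} (hf : ConvexOn ℝ s f)
    (ha : a ∈ s) (hb : b ∈ s) (hf' : HasFDerivAt f f' a) : f a + f' (b - a) ≤ f b := by
  set ℓ : ℝ →ᵃ[ℝ] E := AffineMap.lineMap a b
  have hline : ConvexOn ℝ (ℓ ⁻¹' s) (f ∘ ℓ) := hf.comp_affineMap ℓ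
  have hderiv : HasDerivAt (f ∘ ℓ) (f' (b - a)) 0 :=
    HasFDerivAt.comp_hasDerivAt (0 : ℝ) (by simpa [ℓ] using hf') AffineMap.hasDerivAt_lineMap
  have := hline.le_slope_of_hasDerivAt (x := 0) (y := 1) (by simpa [ℓ] using ha)
    (by simpa [ℓ] using hb) one_pos hderiv
  simp only [ℓ, slope_def_field, Function.comp_apply, AffineMap.lineMap_apply_zero,
    AffineMap.lineMap_apply_one, sub_zero, div_one] at this
  linarith

section Bregman

variable {X : Type*} [NormedAddCommGroup X] [InnerProductSpace ℝ X] [CompleteSpace X]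

noncomputable def bregmanDiv (f : X → ℝ) (x y : X) : ℝ := f x - f y - ⟪gradient f y, x - y⟫

variable {f : X → ℝ}

theorem ConvexOn.add_inner_gradient_le_s3 {s : Set X} {a b : X} (hf : ConvexOn ℝ s f)
    (ha : a ∈ s) (hb : b ∈ s) (hfa : DifferentiableAt ℝ f a) :
    f a + ⟪gradient f a, b - a⟫ ≤ f b := by
  simpa using hf.add_apply_sub_le ha hb hfa.hasGradientAt.hasFDerivAt

theorem ConvexOn.inner_gradient_sub_le_bregmanDiv {s : Set X} {x y z : X} (hf : ConvexOn ℝ s f)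
    (hx : x ∈ s) (hy : y ∈ s) (hz : z ∈ s) (hfy : DifferentiableAt ℝ f y)
    (hfz : DifferentiableAt ℝ f z) :
    ⟪gradient f y - gradient f z, z - x⟫ ≤ bregmanDiv f x y := by
  have hyz := hf.add_inner_gradient_le_s3 hy hz hfy
  have hzx := hf.add_inner_gradient_le_s3 hz hx hfz
  have hsplit : ⟪gradient f y - gradient f z, z - x⟫
      = ⟪gradient f y, z - y⟫ - ⟪gradient f y, x - y⟫ + ⟪gradient f z, x - z⟫ := by
    simp only [inner_sub_left, inner_sub_right]; ring
  rw [bregmanDiv, hsplit]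
  linarith

theorem ConvexOn.mul_norm_gradient_sub_le_bregmanDiv (hf : ConvexOn ℝ univ f)
    (hdiff : Differentiable ℝ f) (x y : X) {δ : ℝ} (hδ : 0 ≤ δ) :
    let z := x - δ • NormedSpace.normalize (gradient f x - gradient f y)
    δ * (‖gradient f x - gradient f y‖ - ‖gradient f x - gradient f z‖) ≤ bregmanDiv f x y := by
  intro z
  set e := NormedSpace.normalize (gradient f x - gradient f y)
  have hthree := hf.inner_gradient_sub_le_bregmanDiv (mem_univ x) (mem_univ y) (mem_univ z)
    (hdiff y) (hdiff z)
  have hcs : ⟪gradient f x - gradient f z, e⟫ ≤ ‖gradient f x - gradient f z‖ :=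
    (real_inner_le_norm _ _).trans
      (mul_le_of_le_one_right (norm_nonneg _) (NormedSpace.norm_normalize_le_one _))
  calc δ * (‖gradient f x - gradient f y‖ - ‖gradient f x - gradient f z‖)
      ≤ δ * (⟪gradient f x - gradient f y, e⟫ - ⟪gradient f x - gradient f z, e⟫) := by
        rw [real_inner_normalize_self]; gcongr
    _ = ⟪gradient f y - gradient f z, z - x⟫ := by
        rw [show z - x = -(δ • e) by simp [z, e]]
        simp only [inner_sub_left, inner_neg_right, real_inner_smul_right]
        ring
    _ ≤ bregmanDiv f x y := hthree

end Bregman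

theorem convex_C1ub_jet_satisfies_SCW1_general
    {X : Type*} [NormedAddCommGroup X] [InnerProductSpace ℝ X] [CompleteSpace X]
    (F : X → ℝ) (hconv : ConvexOn ℝ univ F) (hdiff : Differentiable ℝ F)
    (hu : ∀ s : Set X, Bornology.IsBounded s → UniformContinuousOn (gradient F) s)
    (B : Set X) (hB : Bornology.IsBounded B)
    (x y : ℕ → X) (hx : ∀ n, x n ∈ B)
    (h : Tendsto (fun n => F (x n) - F (y n) - ⟪gradient F (y n), x n - y n⟫) atTop (nhds 0)) :
    Tendsto (fun n => gradient F (x n) - gradient F (y n)) atTop (nhds 0) := by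
  rw [NormedAddGroup.tendsto_nhds_zero]
  intro ε hε
  obtain ⟨δ₀, hδ₀, hclose⟩ := Metric.uniformContinuousOn_iff.mp
    (hu _ (hB.cthickening (δ := 1))) (ε / 2) (half_pos hε)
  set δ := min 1 (δ₀ / 2)
  have hδ : 0 < δ := lt_min one_pos (half_pos hδ₀)
  filter_upwards [h.eventually (gt_mem_nhds (mul_pos hδ (half_pos hε)))] with n hn
  set z := x n - δ • NormedSpace.normalize (gradient F (x n) - gradient F (y n))
  have hzx : dist z (x n) ≤ δ := by
    simpa [z, dist_eq_norm, norm_smul, abs_of_pos hδ] using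
      mul_le_of_le_one_right hδ.le (NormedSpace.norm_normalize_le_one _)
  have hgrad : ‖gradient F (x n) - gradient F z‖ < ε / 2 := by
    rw [← dist_eq_norm, dist_comm]
    refine hclose z ?_ (x n) (Metric.self_subset_cthickening _ (hx n)) ?_
    · exact Metric.mem_cthickening_of_dist_le _ _ _ _ (hx n) (hzx.trans (min_le_left _ _))
    · exact hzx.trans_lt ((min_le_right _ _).trans_lt (half_lt_self hδ₀))
  have hbregman := hconv.mul_norm_gradient_sub_le_bregmanDiv hdiff (x n) (y n) hδ.le
  have := lt_of_mul_lt_mul_left (hbregman.trans_lt hn) hδ.le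
  linarith

/-- a convex function with uniformly continuous gradient on bounded sets
satisfies condition (SCW¹) on every bounded set. -/
theorem convex_C1ub_jet_satisfies_SCW1
    {X : Type*} [NormedAddCommGroup X] [InnerProductSpace ℝ X] [CompleteSpace X]
    (F : X → ℝ) (hconv : ConvexOn ℝ univ F) (hdiff : Differentiable ℝ F)
    (hu : ∀ s : Set X, Bornology.IsBounded s → UniformContinuousOn (gradient F) s)
    (B : Set X) (hB : Bornology.IsBounded B)
    (x y : ℕ → X) (hx : ∀ n, x n ∈ B) (hy : ∀ n, y n ∈ B)
    (h : Tendsto (fun n => F (x n) - F (y n) - ⟪gradient F (y n), x n - y n⟫) atTop (nhds 0)) :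
    Tendsto (fun n => gradient F (x n) - gradient F (y n)) atTop (nhds 0) :=
  convex_C1ub_jet_satisfies_SCW1_general F hconv hdiff hu B hB x y hx h
end

section
/- Let X be a real Hilbert space, F : X → ℝ a convex differentiable function, and x, y ∈ X points with ∇F(x) ≠ ∇F(y). Set α := F(x) − F(y) − ⟨∇F(y), x − y⟩ and assume α > 0, and let v := (∇F(y) − ∇F(x)) / ‖∇F(y) − ∇F(x)‖. Then ⟨∇F(x + √α·v) − ∇F(x), v⟩ ≥ −√α + ‖∇F(y) − ∇F(x)‖. -/
open Set

local notation "⟪" x ", " y "⟫" => @inner ℝ _ _ x y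

lemma grad_ineq_aux
    {X : Type*} [NormedAddCommGroup X] [InnerProductSpace ℝ X] [CompleteSpace X]
    (F : X → ℝ) (hconv : ConvexOn ℝ univ F) (hdiff : Differentiable ℝ F)
    (a b : X) : ⟪gradient F a, b - a⟫ ≤ F b - F a := by
  set g : ℝ → ℝ := fun t => F (a + t • (b - a)) with hg
  have hline : HasDerivAt (fun t : ℝ => a + t • (b - a)) (b - a) 0 := by
    simpa using ((hasDerivAt_id (0:ℝ)).smul_const (b - a)).const_add a
  have hgd : HasDerivAt g ⟪gradient F a, b - a⟫ 0 := by
    have := ((hdiff (a + (0:ℝ) • (b - a))).hasFDerivAt).comp_hasDerivAt 0 hline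
    simp only [zero_smul, add_zero] at this
    rw [show ⟪gradient F a, b - a⟫ = fderiv ℝ F a (b - a) from
      ((hdiff a).hasGradientAt.fderiv_apply).symm]
    exact this
  have hgc : ConvexOn ℝ univ g := by
    have := hconv.comp_affineMap (AffineMap.lineMap a b : ℝ →ᵃ[ℝ] X)
    have heq : (F ∘ (AffineMap.lineMap a b : ℝ →ᵃ[ℝ] X)) = g := by
      funext t
      simp [hg, AffineMap.lineMap_apply, add_comm]
    rw [heq] at this
    simpa using this
  have := hgc.le_slope_of_hasDerivAt (mem_univ (0:ℝ)) (mem_univ (1:ℝ)) one_pos hgd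
  rw [slope_def_field] at this
  simpa [hg] using this

/-- key inequality for the necessity of (SCW¹). -/
theorem convex_gradient_key_inequality
    {X : Type*} [NormedAddCommGroup X] [InnerProductSpace ℝ X] [CompleteSpace X]
    (F : X → ℝ) (hconv : ConvexOn ℝ univ F) (hdiff : Differentiable ℝ F)
    (x y : X) (hxy : gradient F x ≠ gradient F y)
    (α : ℝ) (hα : α = F x - F y - ⟪gradient F y, x - y⟫) (hαpos : 0 < α)
    (v : X) (hv : v = ‖gradient F y - gradient F x‖⁻¹ • (gradient F y - gradient F x)) :
    ⟪gradient F (x + Real.sqrt α • v) - gradient F x, v⟫ ≥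
      -Real.sqrt α + ‖gradient F y - gradient F x‖ := by
  set s := Real.sqrt α with hs
  have hspos : 0 < s := Real.sqrt_pos.mpr hαpos
  set z := x + s • v with hz
  have hnorm : ‖gradient F y - gradient F x‖ ≠ 0 := by
    simpa [sub_eq_zero] using fun h => hxy h.symm
  have hinner_v : ⟪gradient F y - gradient F x, v⟫ = ‖gradient F y - gradient F x‖ := by
    rw [hv, real_inner_smul_right, real_inner_self_eq_norm_sq]
    field_simp
  have h1 : ⟪gradient F z, x - z⟫ ≤ F x - F z := grad_ineq_aux F hconv hdiff z x
  have h2 : ⟪gradient F y, z - y⟫ ≤ F z - F y := grad_ineq_aux F hconv hdiff y z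
  have hxz : x - z = -(s • v) := by rw [hz]; abel
  have hzy : z - y = (x - y) + s • v := by rw [hz]; abel
  rw [hxz, inner_neg_right, real_inner_smul_right] at h1
  rw [hzy, inner_add_right, real_inner_smul_right] at h2
  -- h1 : -(s * ⟪∇F z, v⟫) ≤ F x - F z
  -- h2 : ⟪∇F y, x - y⟫ + s * ⟪∇F y, v⟫ ≤ F z - F y
  have key : s * ⟪gradient F y, v⟫ - α ≤ s * ⟪gradient F z, v⟫ := by
    have hαeq : ⟪gradient F y, x - y⟫ = F x - F y - α := by rw [hα]; ring
    rw [hαeq] at h2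
    linarith
  have key2 : ⟪gradient F y, v⟫ - s ≤ ⟪gradient F z, v⟫ := by
    have hα' : α = s * s := (Real.mul_self_sqrt hαpos.le).symm
    rw [hα'] at key
    nlinarith
  have := hinner_v
  rw [inner_sub_left] at this ⊢
  linarith
end

section
/- Let X be a real Hilbert space, K a compact subset of X, and f : K → ℝ, G : K → X continuous functions satisfying condition (CW¹): whenever x, y ∈ K and f(x) = f(y) + ⟨G(y), x − y⟩, then G(x) = G(y). Then (f, G) also satisfies condition (SCW¹) on K: for all sequences (x_n), (y_n) in K, if f(x_n) − f(y_n) − ⟨G(y_n), x_n − y_n⟩ → 0 then G(x_n) − G(y_n) → 0. -/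
open Set Filter Topology

local notation "⟪" x ", " y "⟫" => @inner ℝ _ _ x y

/-! On the compact set `K ×ˢ K` the first-order gap `f x - f y - ⟪G y, x - y⟫` and the difference
`G x - G y` are continuous, and (CW¹) says the zero set of the first lies in that of the second.
Along any subsequence of `(xₙ, yₙ)` converging to a point `(a, b)` the gap tends to zero, so
`G a = G b`; hence every subsequence of `G xₙ - G yₙ` has a further subsequence tending to `0`. -/

theorem IsCompact.tendsto_of_eq_imp_eq {Z α β ι : Type*} [TopologicalSpace Z]
    [FirstCountableTopology Z] [TopologicalSpace α] [T2Space α] [TopologicalSpace β]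
    {S : Set Z} (hS : IsCompact S) {φ : Z → α} {ψ : Z → β}
    (hφ : ContinuousOn φ S) (hψ : ContinuousOn ψ S) {a : α} {b : β}
    (hab : ∀ p ∈ S, φ p = a → ψ p = b) {l : Filter ι} [l.IsCountablyGenerated]
    {z : ι → Z} (hz : ∀ i, z i ∈ S) (h : Tendsto (φ ∘ z) l (𝓝 a)) :
    Tendsto (ψ ∘ z) l (𝓝 b) := by
  refine tendsto_of_subseq_tendsto fun ns hns => ?_
  obtain ⟨p, hpS, ms, hms, hlim⟩ := hS.tendsto_subseq fun n => hz (ns n)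
  have hlimS : Tendsto (z ∘ ns ∘ ms) atTop (𝓝[S] p) :=
    tendsto_nhdsWithin_iff.2 ⟨hlim, Eventually.of_forall fun n => hz _⟩
  have hφp : φ p = a :=
    tendsto_nhds_unique ((hφ p hpS).tendsto.comp hlimS) (h.comp (hns.comp hms.tendsto_atTop))
  exact ⟨ms, hab p hpS hφp ▸ (hψ p hpS).tendsto.comp hlimS⟩

theorem CW1_implies_SCW1_on_compact_general
    {X : Type*} [NormedAddCommGroup X] [InnerProductSpace ℝ X]
    (K : Set X) (hK : IsCompact K)
    (f : X → ℝ) (G : X → X) (hf : ContinuousOn f K) (hG : ContinuousOn G K)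
    (hCW1 : ∀ x ∈ K, ∀ y ∈ K, f x = f y + ⟪G y, x - y⟫ → G x = G y)
    (x y : ℕ → X) (hx : ∀ n, x n ∈ K) (hy : ∀ n, y n ∈ K)
    (h : Tendsto (fun n => f (x n) - f (y n) - ⟪G (y n), x n - y n⟫) atTop (nhds 0)) :
    Tendsto (fun n => G (x n) - G (y n)) atTop (nhds 0) := by
  have hfst : ContinuousOn (fun p : X × X => p.1) (K ×ˢ K) := continuousOn_fst
  have hsnd : ContinuousOn (fun p : X × X => p.2) (K ×ˢ K) := continuousOn_snd
  have hf₁ := hf.comp hfst fun _ hp => hp.1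
  have hf₂ := hf.comp hsnd fun _ hp => hp.2
  have hG₁ := hG.comp hfst fun _ hp => hp.1
  have hG₂ := hG.comp hsnd fun _ hp => hp.2
  exact (hK.prod hK).tendsto_of_eq_imp_eq
    (φ := fun p => f p.1 - f p.2 - ⟪G p.2, p.1 - p.2⟫) (ψ := fun p => G p.1 - G p.2)
    ((hf₁.sub hf₂).sub (hG₂.inner (hfst.sub hsnd))) (hG₁.sub hG₂)
    (fun p hp hgap => sub_eq_zero.2 (hCW1 p.1 hp.1 p.2 hp.2 (by linarith)))
    (z := fun n => (x n, y n)) (fun n => ⟨hx n, hy n⟩) h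

/-- on a compact set, (CW¹) implies (SCW¹) for continuous jets. -/
theorem CW1_implies_SCW1_on_compact
    {X : Type*} [NormedAddCommGroup X] [InnerProductSpace ℝ X] [CompleteSpace X]
    (K : Set X) (hK : IsCompact K)
    (f : X → ℝ) (G : X → X) (hf : ContinuousOn f K) (hG : ContinuousOn G K)
    (hCW1 : ∀ x ∈ K, ∀ y ∈ K, f x = f y + ⟪G y, x - y⟫ → G x = G y)
    (x y : ℕ → X) (hx : ∀ n, x n ∈ K) (hy : ∀ n, y n ∈ K)
    (h : Tendsto (fun n => f (x n) - f (y n) - ⟪G (y n), x n - y n⟫) atTop (nhds 0)) :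
    Tendsto (fun n => G (x n) - G (y n)) atTop (nhds 0) :=
  CW1_implies_SCW1_on_compact_general K hK f G hf hG hCW1 x y hx hy h
end

section
/- Let X be a real Hilbert space, B a subset of X, and f : B → ℝ, G : B → X bounded functions satisfying condition (C): f(x) ≥ f(y) + ⟨G(y), x − y⟩ for all x, y ∈ B. Set C := 2·sup_{z∈B} ‖G(z)‖, and for each y ∈ B define ψ_y : X → ℝ by ψ_y(x) = sup_{z∈B} { f(z) + ⟨G(z), x − z⟩ − f(y) − ⟨G(y), x − y⟩ }. Then for every y ∈ B: ψ_y is everywhere finite, convex, and C-Lipschitz on X, and moreover ψ_y(y) = 0 and 0 ≤ ψ_y(x) ≤ C‖x − y‖ for all x ∈ X. -/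
open Set

local notation "⟪" x ", " y "⟫" => @inner ℝ _ _ x y

/-! For fixed `y`, `ψ_y` is the pointwise supremum over `z ∈ B` of the affine functions
`x ↦ ℓ_z(x) - ℓ_y(x)` (`tangentGap f G y z`), where `ℓ_z(x) = f z + ⟪G z, x - z⟫`. Their slopes
`G z - G y` have norm at most `C`, so each member satisfies `φ x ≤ φ x' + C‖x - x'‖`. Condition (C)
says that every member is `≤ 0` at `y`, hence `≤ C‖x - y‖` everywhere, so the supremum is finite and
inherits convexity and the Lipschitz bound. Since `z = y` contributes the zero function,
`ψ_y(y) = 0 ≤ ψ_y`. -/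

section SupOfFamily

variable {ι : Type*} {S : Set ι}

theorem sSup_image_le_sSup_image_add {φ φ' : ι → ℝ} {c : ℝ} (hS : S.Nonempty)
    (hbdd : BddAbove (φ' '' S)) (h : ∀ i ∈ S, φ i ≤ φ' i + c) :
    sSup (φ '' S) ≤ sSup (φ' '' S) + c :=
  csSup_le (hS.image φ) <| forall_mem_image.2 fun i hi =>
    (h i hi).trans (add_le_add_left (le_csSup hbdd (mem_image_of_mem φ' hi)) c)

theorem convexOn_sSup_image {E : Type*} [AddCommGroup E] [Module ℝ E] {s : Set E}
    {φ : ι → E → ℝ} (hs : Convex ℝ s) (hS : S.Nonempty)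
    (hbdd : ∀ x ∈ s, BddAbove ((φ · x) '' S)) (hφ : ∀ i ∈ S, ConvexOn ℝ s (φ i)) :
    ConvexOn ℝ s fun x => sSup ((φ · x) '' S) := by
  refine ⟨hs, fun x hx x' hx' a b ha hb hab => csSup_le (hS.image _) ?_⟩
  rintro _ ⟨i, hi, rfl⟩
  calc φ i (a • x + b • x') ≤ a • φ i x + b • φ i x' := (hφ i hi).2 hx hx' ha hb hab
    _ ≤ a • sSup ((φ · x) '' S) + b • sSup ((φ · x') '' S) :=
      add_le_add (smul_le_smul_of_nonneg_left (le_csSup (hbdd x hx) (mem_image_of_mem _ hi)) ha)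
        (smul_le_smul_of_nonneg_left (le_csSup (hbdd x' hx') (mem_image_of_mem _ hi)) hb)

end SupOfFamily

section TangentGap

variable {X : Type*} [NormedAddCommGroup X] [InnerProductSpace ℝ X]

def tangentGap (f : X → ℝ) (G : X → X) (y z x : X) : ℝ :=
  f z + ⟪G z, x - z⟫ - f y - ⟪G y, x - y⟫

variable (f : X → ℝ) (G : X → X) (y z : X)

theorem tangentGap_self_left (x : X) : tangentGap f G y y x = 0 := by
  simp only [tangentGap]; ring

theorem tangentGap_sub_tangentGap (x x' : X) :
    tangentGap f G y z x - tangentGap f G y z x' = ⟪G z - G y, x - x'⟫ := by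
  simp only [tangentGap, inner_sub_left, inner_sub_right]; ring

theorem convexOn_tangentGap : ConvexOn ℝ univ (tangentGap f G y z) := by
  have h : tangentGap f G y z = fun x => innerₛₗ ℝ (G z - G y) x + tangentGap f G y z 0 := by
    funext x
    have hx := tangentGap_sub_tangentGap f G y z x 0
    rw [sub_zero] at hx
    rw [innerₛₗ_apply_apply, ← hx]
    ring
  rw [h]
  exact ((innerₛₗ ℝ (G z - G y)).convexOn convex_univ).add_const _

variable {f G y z}

theorem tangentGap_self_right_nonpos (h : f z + ⟪G z, y - z⟫ ≤ f y) :
    tangentGap f G y z y ≤ 0 := by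
  simp only [tangentGap, sub_self, inner_zero_right]; linarith

theorem tangentGap_le_add {L : ℝ} (hL : ‖G z - G y‖ ≤ L) (x x' : X) :
    tangentGap f G y z x ≤ tangentGap f G y z x' + L * ‖x - x'‖ := by
  have hinner : ⟪G z - G y, x - x'⟫ ≤ L * ‖x - x'‖ :=
    (real_inner_le_norm _ _).trans (mul_le_mul_of_nonneg_right hL (norm_nonneg _))
  linarith [tangentGap_sub_tangentGap f G y z x x']

end TangentGap

theorem norm_sub_le_two_mul_sSup_image {α E : Type*} [SeminormedAddCommGroup E] {B : Set α}
    {G : α → E} (hbdd : BddAbove ((fun z => ‖G z‖) '' B)) {y z : α} (hz : z ∈ B) (hy : y ∈ B) :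
    ‖G z - G y‖ ≤ 2 * sSup ((fun z => ‖G z‖) '' B) := by
  have hz' := le_csSup hbdd (mem_image_of_mem _ hz)
  have hy' := le_csSup hbdd (mem_image_of_mem _ hy)
  linarith [norm_sub_le (G z) (G y)]

theorem psi_properties_general
    {X : Type*} [NormedAddCommGroup X] [InnerProductSpace ℝ X]
    (B : Set X) (f : X → ℝ) (G : X → X)
    (hGbd : ∃ MG : ℝ, ∀ z ∈ B, ‖G z‖ ≤ MG)
    (hC : ∀ x ∈ B, ∀ y ∈ B, f x ≥ f y + ⟪G y, x - y⟫)
    (C : ℝ) (hCdef : C = 2 * sSup ((fun z => ‖G z‖) '' B))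
    (ψ : X → X → ℝ)
    (hψ : ∀ y ∈ B, ∀ x : X,
      ψ y x = sSup ((fun z => f z + ⟪G z, x - z⟫ - f y - ⟪G y, x - y⟫) '' B)) :
    ∀ y ∈ B,
      (∀ x : X, BddAbove ((fun z => f z + ⟪G z, x - z⟫ - f y - ⟪G y, x - y⟫) '' B)) ∧
      ConvexOn ℝ univ (ψ y) ∧
      (∀ x x' : X, |ψ y x - ψ y x'| ≤ C * ‖x - x'‖) ∧
      ψ y y = 0 ∧
      (∀ x : X, 0 ≤ ψ y x ∧ ψ y x ≤ C * ‖x - y‖) := by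
  intro y hy
  obtain ⟨MG, hMG⟩ := hGbd
  have hgap_le : ∀ z ∈ B, ∀ x x', tangentGap f G y z x ≤ tangentGap f G y z x' + C * ‖x - x'‖ :=
    fun z hz => tangentGap_le_add <| hCdef ▸
      norm_sub_le_two_mul_sSup_image ⟨MG, forall_mem_image.2 hMG⟩ hz hy
  have hgap_base : ∀ z ∈ B, tangentGap f G y z y ≤ 0 := fun z hz =>
    tangentGap_self_right_nonpos (hC y hy z hz)
  have hbdd : ∀ x, BddAbove ((tangentGap f G y · x) '' B) := fun x =>
    ⟨C * ‖x - y‖, forall_mem_image.2 fun z hz => by linarith [hgap_le z hz x y, hgap_base z hz]⟩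
  have hψ' : ψ y = fun x => sSup ((tangentGap f G y · x) '' B) := funext (hψ y hy)
  have hlip : ∀ x x', ψ y x ≤ ψ y x' + C * ‖x - x'‖ := fun x x' => by
    rw [hψ']; exact sSup_image_le_sSup_image_add ⟨y, hy⟩ (hbdd x') fun z hz => hgap_le z hz x x'
  have hnonneg : ∀ x, 0 ≤ ψ y x := fun x => by
    rw [hψ', ← tangentGap_self_left f G y x]; exact le_csSup (hbdd x) (mem_image_of_mem _ hy)
  have hzero : ψ y y = 0 := by
    refine le_antisymm ?_ (hnonneg y)
    rw [hψ']; exact csSup_le ⟨_, mem_image_of_mem _ hy⟩ (forall_mem_image.2 hgap_base)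
  refine ⟨hbdd, ?_, fun x x' => abs_sub_le_iff.2 ⟨?_, ?_⟩, hzero, fun x => ⟨hnonneg x, ?_⟩⟩
  · rw [hψ']
    exact convexOn_sSup_image convex_univ ⟨y, hy⟩ (fun x _ => hbdd x)
      fun z _ => convexOn_tangentGap f G y z
  · linarith [hlip x x']
  · rw [norm_sub_rev]; linarith [hlip x' x]
  · linarith [hlip x y]

/-- properties of the functions ψ_y. -/
theorem psi_properties
    {X : Type*} [NormedAddCommGroup X] [InnerProductSpace ℝ X] [CompleteSpace X]
    (B : Set X) (f : X → ℝ) (G : X → X)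
    (hfbd : ∃ Mf : ℝ, ∀ z ∈ B, |f z| ≤ Mf) (hGbd : ∃ MG : ℝ, ∀ z ∈ B, ‖G z‖ ≤ MG)
    (hC : ∀ x ∈ B, ∀ y ∈ B, f x ≥ f y + ⟪G y, x - y⟫)
    (C : ℝ) (hCdef : C = 2 * sSup ((fun z => ‖G z‖) '' B))
    (ψ : X → X → ℝ)
    (hψ : ∀ y ∈ B, ∀ x : X,
      ψ y x = sSup ((fun z => f z + ⟪G z, x - z⟫ - f y - ⟪G y, x - y⟫) '' B)) :
    ∀ y ∈ B,
      (∀ x : X, BddAbove ((fun z => f z + ⟪G z, x - z⟫ - f y - ⟪G y, x - y⟫) '' B)) ∧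
      ConvexOn ℝ univ (ψ y) ∧
      (∀ x x' : X, |ψ y x - ψ y x'| ≤ C * ‖x - x'‖) ∧
      ψ y y = 0 ∧
      (∀ x : X, 0 ≤ ψ y x ∧ ψ y x ≤ C * ‖x - y‖) :=
  psi_properties_general B f G hGbd hC C hCdef ψ hψ
end

section
/- Let X be a real Hilbert space, B a bounded subset of X, and f : B → ℝ, G : B → X bounded functions satisfying condition (C): f(x) ≥ f(y) + ⟨G(y), x − y⟩ for all x, y ∈ B, and condition (SCW¹): for all sequences (x_n), (y_n) in B, if f(x_n) − f(y_n) − ⟨G(y_n), x_n − y_n⟩ → 0 then G(x_n) − G(y_n) → 0. For each y ∈ B define ψ_y : X → ℝ by ψ_y(x) = sup_{z∈B} { f(z) + ⟨G(z), x − z⟩ − f(y) − ⟨G(y), x − y⟩ }, and define ω₀ : (0, ∞) → [0, ∞) by ω₀(t) = sup { ψ_y(x)/‖x − y‖ : 0 < ‖x − y‖ ≤ t, x ∈ X, y ∈ B }. Then lim_{t→0⁺} ω₀(t) = 0. -/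
/-!
Writing `D(y, z) = f y - f z - ⟪G z, y - z⟫ ≥ 0`, each term of `ψ_y(x)` equals
`⟪G z - G y, x - y⟫ - D(y, z)`. Condition (SCW¹) upgrades, by a sequence argument, to a
uniform statement: `D(y, z) < δ` forces `‖G y - G z‖ < ε`. For such `z` the term is at most
`ε ‖x - y‖`; for the others it is at most `2 M ‖x - y‖ - δ ≤ 0` as soon as `‖x - y‖ ≤ δ / (2M)`,
where `M` bounds `‖G‖` on `B`. Hence `ω₀(t) ≤ ε` for `t < δ / (2M)`.
-/

open Set Filter Topology

local notation "⟪" x ", " y "⟫" => @inner ℝ _ _ x y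

lemma exists_pos_forall_lt_imp_norm_sub_lt {α E : Type*} [SeminormedAddCommGroup E]
    {s : Set α} {D : α → α → ℝ} {g : α → E} (hD : ∀ x ∈ s, ∀ y ∈ s, 0 ≤ D x y)
    (h : ∀ x y : ℕ → α, (∀ n, x n ∈ s) → (∀ n, y n ∈ s) →
      Tendsto (fun n => D (x n) (y n)) atTop (𝓝 0) →
      Tendsto (fun n => g (x n) - g (y n)) atTop (𝓝 0))
    {ε : ℝ} (hε : 0 < ε) : ∃ δ > 0, ∀ x ∈ s, ∀ y ∈ s, D x y < δ → ‖g x - g y‖ < ε := by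
  by_contra! hbad
  choose x hx y hy hDxy hgxy using fun n : ℕ => hbad (1 / (n + 1)) Nat.one_div_pos_of_nat
  have hDlim : Tendsto (fun n => D (x n) (y n)) atTop (𝓝 0) :=
    squeeze_zero (fun n => hD _ (hx n) _ (hy n)) (fun n => (hDxy n).le)
      tendsto_one_div_add_atTop_nhds_zero_nat
  have hglim := tendsto_zero_iff_norm_tendsto_zero.1 (h x y hx hy hDlim)
  obtain ⟨n, hn⟩ := (hglim.eventually (gt_mem_nhds hε)).exists
  exact (hgxy n).not_gt hn

section InnerProductSpace

variable {X : Type*} [NormedAddCommGroup X] [InnerProductSpace ℝ X]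

lemma real_inner_sub_le_mul_norm {u v : X} {D ε δ : ℝ} (hD : 0 ≤ D) (hε : 0 ≤ ε)
    (hu : D < δ → ‖u‖ ≤ ε) (huv : ‖u‖ * ‖v‖ ≤ δ) : ⟪u, v⟫ - D ≤ ε * ‖v‖ := by
  have hinner := real_inner_le_norm u v
  rcases lt_or_ge D δ with hDδ | hDδ
  · nlinarith [norm_nonneg v, hu hDδ]
  · nlinarith [norm_nonneg v]

def bregmanGap (f : X → ℝ) (G : X → X) (x y : X) : ℝ := f x - f y - ⟪G y, x - y⟫

variable {f : X → ℝ} {G : X → X} {B : Set X} {x y : X}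

lemma support_sub_eq_inner_sub_bregmanGap (z : X) :
    f z + ⟪G z, x - z⟫ - f y - ⟪G y, x - y⟫
      = ⟪G z - G y, x - y⟫ - bregmanGap f G y z := by
  have hsplit : x - z = (x - y) + (y - z) := by abel
  rw [bregmanGap, hsplit, inner_add_right, inner_sub_left]
  ring

lemma sSup_support_sub_nonneg (hy : y ∈ B) :
    0 ≤ sSup ((fun z => f z + ⟪G z, x - z⟫ - f y - ⟪G y, x - y⟫) '' B) :=
  Real.sSup_nonneg' ⟨0, ⟨y, hy, by ring⟩, le_rfl⟩

lemma sSup_support_sub_le {M ε δ : ℝ} (hG : ∀ z ∈ B, ‖G z‖ ≤ M) (hy : y ∈ B)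
    (hgap : ∀ z ∈ B, 0 ≤ bregmanGap f G y z) (hε : 0 ≤ ε)
    (hgapε : ∀ z ∈ B, bregmanGap f G y z < δ → ‖G y - G z‖ ≤ ε)
    (hxy : 2 * M * ‖x - y‖ ≤ δ) :
    sSup ((fun z => f z + ⟪G z, x - z⟫ - f y - ⟪G y, x - y⟫) '' B) ≤ ε * ‖x - y‖ := by
  refine Real.sSup_le ?_ (by positivity)
  rintro _ ⟨z, hz, rfl⟩
  dsimp only
  rw [support_sub_eq_inner_sub_bregmanGap]
  refine real_inner_sub_le_mul_norm (hgap z hz) hε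
    (fun h => norm_sub_rev (G z) (G y) ▸ hgapε z hz h) ?_
  have hGzy : ‖G z - G y‖ ≤ 2 * M := by linarith [norm_sub_le_of_le (hG z hz) (hG y hy)]
  calc ‖G z - G y‖ * ‖x - y‖ ≤ 2 * M * ‖x - y‖ := by gcongr
    _ ≤ δ := hxy

end InnerProductSpace

section Slopes

variable {X : Type*} [SeminormedAddCommGroup X] {B : Set X} {ψ : X → X → ℝ} {t : ℝ}

def slopes (B : Set X) (ψ : X → X → ℝ) (t : ℝ) : Set ℝ :=
  {r : ℝ | ∃ x : X, ∃ y ∈ B, 0 < ‖x - y‖ ∧ ‖x - y‖ ≤ t ∧ r = ψ y x / ‖x - y‖}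

lemma sSup_slopes_nonneg (hψ : ∀ y ∈ B, ∀ x, 0 ≤ ψ y x) : 0 ≤ sSup (slopes B ψ t) :=
  Real.sSup_nonneg <| by
    rintro _ ⟨x, y, hy, hxy, -, rfl⟩
    exact div_nonneg (hψ y hy x) hxy.le

lemma sSup_slopes_le {c : ℝ} (hc : 0 ≤ c)
    (hψ : ∀ y ∈ B, ∀ x, ‖x - y‖ ≤ t → ψ y x ≤ c * ‖x - y‖) : sSup (slopes B ψ t) ≤ c :=
  Real.sSup_le (by
    rintro _ ⟨x, y, hy, hxy, hxyt, rfl⟩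
    exact (div_le_iff₀ hxy).2 (hψ y hy x hxyt)) hc

end Slopes

theorem omega0_tendsto_zero_general
    {X : Type*} [NormedAddCommGroup X] [InnerProductSpace ℝ X]
    (B : Set X)
    (f : X → ℝ) (G : X → X)
    (hGbd : ∃ MG : ℝ, ∀ z ∈ B, ‖G z‖ ≤ MG)
    (hC : ∀ x ∈ B, ∀ y ∈ B, f x ≥ f y + ⟪G y, x - y⟫)
    (hSCW1 : ∀ x y : ℕ → X, (∀ n, x n ∈ B) → (∀ n, y n ∈ B) →
      Tendsto (fun n => f (x n) - f (y n) - ⟪G (y n), x n - y n⟫) atTop (nhds 0) →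
      Tendsto (fun n => G (x n) - G (y n)) atTop (nhds 0))
    (ψ : X → X → ℝ)
    (hψ : ∀ y ∈ B, ∀ x : X,
      ψ y x = sSup ((fun z => f z + ⟪G z, x - z⟫ - f y - ⟪G y, x - y⟫) '' B))
    (ω₀ : ℝ → ℝ)
    (hω₀ : ∀ t > (0 : ℝ),
      ω₀ t = sSup {r : ℝ | ∃ x : X, ∃ y ∈ B,
        0 < ‖x - y‖ ∧ ‖x - y‖ ≤ t ∧ r = ψ y x / ‖x - y‖}) :
    Tendsto ω₀ (nhdsWithin 0 (Ioi 0)) (nhds 0) := by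
  obtain ⟨M, hM0, hM⟩ : ∃ M > 0, ∀ z ∈ B, ‖G z‖ ≤ M :=
    let ⟨M, hM⟩ := hGbd
    ⟨max M 1, by positivity, fun z hz => (hM z hz).trans (le_max_left _ _)⟩
  have hgap : ∀ y ∈ B, ∀ z ∈ B, 0 ≤ bregmanGap f G y z := fun y hy z hz => by
    rw [bregmanGap]
    linarith [hC y hy z hz]
  refine tendsto_order.2 ⟨fun a ha => ?_, fun a ha => ?_⟩
  · filter_upwards [self_mem_nhdsWithin] with t (ht : 0 < t)
    rw [hω₀ t ht]
    exact ha.trans_le <| sSup_slopes_nonneg fun y hy x => hψ y hy x ▸ sSup_support_sub_nonneg hy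
  · obtain ⟨δ, hδ, hGδ⟩ := exists_pos_forall_lt_imp_norm_sub_lt hgap hSCW1 (half_pos ha)
    filter_upwards [Ioo_mem_nhdsGT (show 0 < δ / (2 * M) by positivity)] with t ⟨ht, htδ⟩
    rw [hω₀ t ht]
    refine (sSup_slopes_le (half_pos ha).le fun y hy x hxy => ?_).trans_lt (half_lt_self ha)
    rw [hψ y hy x]
    exact sSup_support_sub_le hM hy (hgap y hy) (half_pos ha).le
      (fun z hz h => (hGδ y hy z hz h).le) ((le_div_iff₀' (by positivity)).1 (hxy.trans htδ.le))

/-- the modulus ω₀ tends to 0 at 0⁺. -/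
theorem omega0_tendsto_zero
    {X : Type*} [NormedAddCommGroup X] [InnerProductSpace ℝ X] [CompleteSpace X]
    (B : Set X) (hB : Bornology.IsBounded B)
    (f : X → ℝ) (G : X → X)
    (hfbd : ∃ Mf : ℝ, ∀ z ∈ B, |f z| ≤ Mf) (hGbd : ∃ MG : ℝ, ∀ z ∈ B, ‖G z‖ ≤ MG)
    (hC : ∀ x ∈ B, ∀ y ∈ B, f x ≥ f y + ⟪G y, x - y⟫)
    (hSCW1 : ∀ x y : ℕ → X, (∀ n, x n ∈ B) → (∀ n, y n ∈ B) →
      Tendsto (fun n => f (x n) - f (y n) - ⟪G (y n), x n - y n⟫) atTop (nhds 0) →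
      Tendsto (fun n => G (x n) - G (y n)) atTop (nhds 0))
    (ψ : X → X → ℝ)
    (hψ : ∀ y ∈ B, ∀ x : X,
      ψ y x = sSup ((fun z => f z + ⟪G z, x - z⟫ - f y - ⟪G y, x - y⟫) '' B))
    (ω₀ : ℝ → ℝ)
    (hω₀ : ∀ t > (0 : ℝ),
      ω₀ t = sSup {r : ℝ | ∃ x : X, ∃ y ∈ B,
        0 < ‖x - y‖ ∧ ‖x - y‖ ≤ t ∧ r = ψ y x / ‖x - y‖}) :
    Tendsto ω₀ (nhdsWithin 0 (Ioi 0)) (nhds 0) :=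
  omega0_tendsto_zero_general B f G hGbd hC hSCW1 ψ hψ ω₀ hω₀
end

section
/- Let X be a real Hilbert space and let ω : [0, ∞) → [0, ∞) be a concave, nondecreasing, continuous function with ω(0) = 0. Define φ : X → ℝ by φ(x) = ∫₀^{‖x‖} ω(s) ds. Then φ is differentiable on X, with ∇φ(x) = ω(‖x‖)·x/‖x‖ for x ≠ 0 and ∇φ(0) = 0, and ‖∇φ(x) − ∇φ(z)‖ ≤ 5·ω(‖x − z‖) for all x, z ∈ X. -/
open Set Filter Topology Asymptotics

local notation "⟪" x ", " y "⟫" => @inner ℝ _ _ x y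

/-!
Away from the origin, `φ` is the composition of the primitive of `ω` with the norm, whose
gradient is the unit vector `x / ‖x‖`; at the origin `|φ x| ≤ ‖x‖ ω ‖x‖ = o(‖x‖)`.
For the Hölder-type bound on `∇φ x = ω ‖x‖ • x / ‖x‖`, concavity with `ω 0 = 0` makes
`ω` subadditive and `ω t / t` nonincreasing, so `|ω a - ω b| ≤ ω |a - b|`. If `‖z‖ ≤ ‖x - z‖`
both gradients are bounded by `2 ω ‖x - z‖` and `ω ‖x - z‖` respectively. Otherwise the
difference splits into a radial part, bounded by `|ω ‖x‖ - ω ‖z‖|`, and an angular part,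
bounded by `ω ‖z‖ · 2 ‖x - z‖ / ‖z‖ ≤ 2 ω ‖x - z‖`. This even gives the constant 3.
-/

section ConcaveModulus

variable {f : ℝ → ℝ}

lemma ConcaveOn.mul_map_le_mul_map (hf : ConcaveOn ℝ (Ici 0) f) (h0 : 0 ≤ f 0) {t s : ℝ}
    (ht : 0 ≤ t) (hts : t ≤ s) : t * f s ≤ s * f t := by
  rcases (ht.trans hts).eq_or_lt with rfl | hs
  · obtain rfl : t = 0 := le_antisymm hts ht
    simp
  have hconc := hf.2 (mem_Ici.2 hs.le) self_mem_Ici (div_nonneg ht hs.le)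
    (sub_nonneg.2 ((div_le_one hs).2 hts)) (add_sub_cancel (t / s) 1)
  simp only [smul_eq_mul, mul_zero, add_zero, div_mul_cancel₀ t hs.ne'] at hconc
  have hchord : t / s * f s ≤ f t := by
    linarith [mul_nonneg (sub_nonneg.2 ((div_le_one hs).2 hts)) h0]
  calc t * f s = s * (t / s * f s) := by field_simp
    _ ≤ s * f t := by gcongr

lemma ConcaveOn.map_add_le (hf : ConcaveOn ℝ (Ici 0) f) (h0 : 0 ≤ f 0) {a b : ℝ}
    (ha : 0 ≤ a) (hb : 0 ≤ b) : f (a + b) ≤ f a + f b := by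
  rcases (add_nonneg ha hb).eq_or_lt with hab | hab
  · obtain ⟨rfl, rfl⟩ : a = 0 ∧ b = 0 := ⟨by linarith, by linarith⟩
    simpa using h0
  have h1 := hf.mul_map_le_mul_map h0 ha (le_add_of_nonneg_right hb)
  have h2 := hf.mul_map_le_mul_map h0 hb (le_add_of_nonneg_left ha)
  exact le_of_mul_le_mul_left (by linarith) hab

lemma ConcaveOn.sub_le_map_abs_sub (hf : ConcaveOn ℝ (Ici 0) f) (hmono : MonotoneOn f (Ici 0))
    (h0 : 0 ≤ f 0) {a b : ℝ} (ha : 0 ≤ a) (hb : 0 ≤ b) : f a - f b ≤ f |a - b| := by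
  have : f a ≤ f (b + |a - b|) :=
    hmono ha (add_nonneg hb (abs_nonneg _)) (by linarith [le_abs_self (a - b)])
  linarith [hf.map_add_le h0 hb (abs_nonneg (a - b))]

lemma ConcaveOn.abs_sub_le_map_abs_sub (hf : ConcaveOn ℝ (Ici 0) f)
    (hmono : MonotoneOn f (Ici 0)) (h0 : 0 ≤ f 0) {a b : ℝ} (ha : 0 ≤ a) (hb : 0 ≤ b) :
    |f a - f b| ≤ f |a - b| :=
  abs_sub_le_iff.2 ⟨hf.sub_le_map_abs_sub hmono h0 ha hb,
    abs_sub_comm a b ▸ hf.sub_le_map_abs_sub hmono h0 hb ha⟩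

end ConcaveModulus

section RadialField

variable {E : Type*} [NormedAddCommGroup E] [NormedSpace ℝ E]

lemma norm_inv_norm_smul_le_one (x : E) : ‖‖x‖⁻¹ • x‖ ≤ 1 := by
  rcases eq_or_ne x 0 with rfl | hx
  · simp
  · exact (norm_smul_inv_norm hx).le

lemma norm_inv_norm_smul_sub_inv_norm_smul_le (x : E) {z : E} (hz : z ≠ 0) :
    ‖‖x‖⁻¹ • x - ‖z‖⁻¹ • z‖ ≤ 2 * ‖x - z‖ / ‖z‖ := by
  have hz' : 0 < ‖z‖ := norm_pos_iff.2 hz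
  have hsplit : ‖x‖⁻¹ • x - ‖z‖⁻¹ • z = ‖z‖⁻¹ • (x - z) + (‖x‖⁻¹ - ‖z‖⁻¹) • x := by
    module
  have hradial : ‖(‖x‖⁻¹ - ‖z‖⁻¹) • x‖ ≤ ‖x - z‖ / ‖z‖ := by
    rcases eq_or_ne x 0 with rfl | hx
    · simp only [smul_zero, norm_zero]
      positivity
    have hx' : 0 < ‖x‖ := norm_pos_iff.2 hx
    calc ‖(‖x‖⁻¹ - ‖z‖⁻¹) • x‖ = |‖x‖ - ‖z‖| / ‖z‖ := by
          rw [norm_smul, Real.norm_eq_abs, inv_sub_inv hx'.ne' hz'.ne', abs_div,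
            abs_of_pos (mul_pos hx' hz'), abs_sub_comm]
          field_simp
      _ ≤ ‖x - z‖ / ‖z‖ := by gcongr; exact abs_norm_sub_norm_le x z
  calc ‖‖x‖⁻¹ • x - ‖z‖⁻¹ • z‖ ≤ ‖‖z‖⁻¹ • (x - z)‖ + ‖(‖x‖⁻¹ - ‖z‖⁻¹) • x‖ :=
        hsplit ▸ norm_add_le _ _
    _ ≤ ‖x - z‖ / ‖z‖ + ‖x - z‖ / ‖z‖ := by
        gcongr
        rw [norm_smul, norm_inv, norm_norm, inv_mul_eq_div]
    _ = 2 * ‖x - z‖ / ‖z‖ := by ring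

noncomputable def radialField (ω : ℝ → ℝ) (x : E) : E := ω ‖x‖ • (‖x‖⁻¹ • x)

@[simp]
lemma radialField_zero (ω : ℝ → ℝ) : radialField ω (0 : E) = 0 := by
  simp [radialField]

lemma norm_radialField_le {ω : ℝ → ℝ} {x : E} (hx : 0 ≤ ω ‖x‖) :
    ‖radialField ω x‖ ≤ ω ‖x‖ := by
  rw [radialField, norm_smul, Real.norm_of_nonneg hx]
  exact mul_le_of_le_one_right hx (norm_inv_norm_smul_le_one x)

theorem norm_radialField_sub_le {ω : ℝ → ℝ} (hconc : ConcaveOn ℝ (Ici 0) ω)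
    (hmono : MonotoneOn ω (Ici 0)) (h0 : ω 0 = 0) (x z : E) :
    ‖radialField ω x - radialField ω z‖ ≤ 3 * ω ‖x - z‖ := by
  set d := ‖x - z‖
  have hω_nonneg : ∀ ⦃t⦄, 0 ≤ t → 0 ≤ ω t := fun t ht => h0 ▸ hmono self_mem_Ici ht ht
  have hnorm_diff : |ω ‖x‖ - ω ‖z‖| ≤ ω d :=
    (hconc.abs_sub_le_map_abs_sub hmono h0.ge (norm_nonneg x) (norm_nonneg z)).trans
      (hmono (abs_nonneg (‖x‖ - ‖z‖)) (norm_nonneg _) (abs_norm_sub_norm_le x z))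
  rcases le_or_gt ‖z‖ d with hzd | hdz
  · have hωz : ω ‖z‖ ≤ ω d := hmono (norm_nonneg _) (norm_nonneg _) hzd
    calc ‖radialField ω x - radialField ω z‖ ≤ ‖radialField ω x‖ + ‖radialField ω z‖ :=
          norm_sub_le _ _
      _ ≤ ω ‖x‖ + ω ‖z‖ := add_le_add (norm_radialField_le (hω_nonneg (norm_nonneg x)))
          (norm_radialField_le (hω_nonneg (norm_nonneg z)))
      _ ≤ 3 * ω d := by linarith [(abs_sub_le_iff.1 hnorm_diff).1]
  have hz' : 0 < ‖z‖ := (norm_nonneg _).trans_lt hdz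
  have hsplit : radialField ω x - radialField ω z =
      (ω ‖x‖ - ω ‖z‖) • (‖x‖⁻¹ • x) + ω ‖z‖ • (‖x‖⁻¹ • x - ‖z‖⁻¹ • z) := by
    simp only [radialField]
    module
  have hradial : ‖(ω ‖x‖ - ω ‖z‖) • (‖x‖⁻¹ • x)‖ ≤ ω d := by
    rw [norm_smul, Real.norm_eq_abs]
    exact (mul_le_of_le_one_right (abs_nonneg _) (norm_inv_norm_smul_le_one x)).trans hnorm_diff
  have hangular : ‖ω ‖z‖ • (‖x‖⁻¹ • x - ‖z‖⁻¹ • z)‖ ≤ 2 * ω d := by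
    calc ‖ω ‖z‖ • (‖x‖⁻¹ • x - ‖z‖⁻¹ • z)‖ ≤ ω ‖z‖ * (2 * d / ‖z‖) := by
          rw [norm_smul, Real.norm_of_nonneg (hω_nonneg (norm_nonneg z))]
          gcongr
          · exact hω_nonneg (norm_nonneg z)
          · exact norm_inv_norm_smul_sub_inv_norm_smul_le x (norm_pos_iff.1 hz')
      _ = 2 * (d * ω ‖z‖) / ‖z‖ := by ring
      _ ≤ 2 * (‖z‖ * ω d) / ‖z‖ := by
          gcongr 2 * ?_ / _
          exact hconc.mul_map_le_mul_map h0.ge (norm_nonneg _) hdz.le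
      _ = 2 * ω d := by field_simp
  calc ‖radialField ω x - radialField ω z‖ ≤ ω d + 2 * ω d :=
        hsplit ▸ (norm_add_le _ _).trans (add_le_add hradial hangular)
    _ = 3 * ω d := by ring

end RadialField

section Gradient

variable {F : Type*} [NormedAddCommGroup F] [InnerProductSpace ℝ F] [CompleteSpace F]

theorem HasDerivAt.comp_hasGradientAt {g : ℝ → ℝ} {g' : ℝ} {f : F → ℝ} {f' x : F}
    (hg : HasDerivAt g g' (f x)) (hf : HasGradientAt f f' x) :
    HasGradientAt (g ∘ f) (g' • f') x := by
  rw [hasGradientAt_iff_hasFDerivAt] at hf ⊢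
  rw [map_smul]
  exact hg.comp_hasFDerivAt x hf

theorem hasGradientAt_norm {x : F} (hx : x ≠ 0) : HasGradientAt (‖·‖) (‖x‖⁻¹ • x) x := by
  have hx' : 0 < ‖x‖ := norm_pos_iff.2 hx
  have hsq : HasGradientAt (fun y : F => ‖y‖ ^ 2) ((2 : ℝ) • x) x := by
    rw [hasGradientAt_iff_hasFDerivAt]
    refine (hasStrictFDerivAt_norm_sq x).hasFDerivAt.congr_fderiv ?_
    ext y
    simp [nsmul_eq_mul]
  have hsqrt := HasDerivAt.comp_hasGradientAt (f := fun y : F => ‖y‖ ^ 2)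
    (Real.hasDerivAt_sqrt (pow_pos hx' 2).ne') hsq
  convert hsqrt using 1
  · ext y
    simp [Real.sqrt_sq (norm_nonneg y)]
  · rw [Real.sqrt_sq hx'.le, smul_smul]
    field_simp

theorem hasDerivAt_integral_of_continuousOn_Ici {ω : ℝ → ℝ} (hcont : ContinuousOn ω (Ici 0))
    {r : ℝ} (hr : 0 < r) : HasDerivAt (fun t => ∫ s in (0 : ℝ)..t, ω s) (ω r) r :=
  intervalIntegral.integral_hasDerivAt_right
    ((hcont.mono Icc_subset_Ici_self).intervalIntegrable_of_Icc hr.le)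
    ((hcont.mono Ioi_subset_Ici_self).stronglyMeasurableAtFilter isOpen_Ioi r hr)
    (hcont.continuousAt (Ici_mem_nhds hr))

theorem hasGradientAt_integral_norm {ω : ℝ → ℝ} (hcont : ContinuousOn ω (Ici 0)) {x : F}
    (hx : x ≠ 0) : HasGradientAt (fun y : F => ∫ s in (0 : ℝ)..‖y‖, ω s) (radialField ω x) x :=
  (hasDerivAt_integral_of_continuousOn_Ici hcont (norm_pos_iff.2 hx)).comp_hasGradientAt
    (hasGradientAt_norm hx)

theorem hasGradientAt_integral_norm_zero {ω : ℝ → ℝ} (hmono : MonotoneOn ω (Ici 0))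
    (hcont : ContinuousWithinAt ω (Ici 0) 0) (h0 : ω 0 = 0) :
    HasGradientAt (fun y : F => ∫ s in (0 : ℝ)..‖y‖, ω s) 0 0 := by
  rw [hasGradientAt_iff_isLittleO_nhds_zero]
  simp only [zero_add, norm_zero, intervalIntegral.integral_same, sub_zero, inner_zero_left]
  have hbound : ∀ y : F, ‖∫ s in (0 : ℝ)..‖y‖, ω s‖ ≤ ω ‖y‖ * ‖y‖ := by
    intro y
    have h := intervalIntegral.norm_integral_le_of_norm_le_const (C := ω ‖y‖) fun s hs => by
      rw [uIoc_of_le (norm_nonneg y)] at hs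
      rw [Real.norm_of_nonneg (h0 ▸ hmono self_mem_Ici hs.1.le hs.1.le)]
      exact hmono hs.1.le (norm_nonneg y) hs.2
    rwa [sub_zero, abs_norm] at h
  have hlim : Tendsto (fun y : F => ω ‖y‖) (𝓝 0) (𝓝 0) :=
    h0 ▸ hcont.tendsto.comp (tendsto_nhdsWithin_iff.2
      ⟨tendsto_norm_zero, Eventually.of_forall fun y => norm_nonneg y⟩)
  refine isLittleO_iff.2 fun c hc => ?_
  filter_upwards [hlim (Iic_mem_nhds hc)] with y hy
  exact (hbound y).trans (mul_le_mul_of_nonneg_right hy (norm_nonneg y))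

end Gradient

theorem radial_primitive_C1omega_general
    {X : Type*} [NormedAddCommGroup X] [InnerProductSpace ℝ X] [CompleteSpace X]
    (ω : ℝ → ℝ) (hconc : ConcaveOn ℝ (Ici 0) ω) (hmono : MonotoneOn ω (Ici 0))
    (hcont : ContinuousOn ω (Ici 0)) (h0 : ω 0 = 0)
    (φ : X → ℝ) (hφ : ∀ x : X, φ x = ∫ s in (0:ℝ)..‖x‖, ω s) :
    Differentiable ℝ φ ∧
    (∀ x : X, x ≠ 0 → gradient φ x = ω ‖x‖ • (‖x‖⁻¹ • x)) ∧
    gradient φ 0 = 0 ∧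
    (∀ x z : X, ‖gradient φ x - gradient φ z‖ ≤ 5 * ω ‖x - z‖) := by
  obtain rfl : φ = fun x => ∫ s in (0:ℝ)..‖x‖, ω s := funext hφ
  have hgrad : ∀ x : X, HasGradientAt (fun x : X => ∫ s in (0:ℝ)..‖x‖, ω s)
      (radialField ω x) x := by
    intro x
    rcases eq_or_ne x 0 with rfl | hx
    · simpa using hasGradientAt_integral_norm_zero hmono (hcont 0 self_mem_Ici) h0
    · exact hasGradientAt_integral_norm hcont hx
  refine ⟨fun x => (hgrad x).differentiableAt, fun x _ => (hgrad x).gradient,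
    by simpa using (hgrad 0).gradient, fun x z => ?_⟩
  rw [(hgrad x).gradient, (hgrad z).gradient]
  have hω : 0 ≤ ω ‖x - z‖ := h0 ▸ hmono self_mem_Ici (norm_nonneg _) (norm_nonneg _)
  linarith [norm_radialField_sub_le hconc hmono h0 x z]

/-- the radial primitive of a concave modulus of continuity is C^{1,ω}
with constant 5. -/
theorem radial_primitive_C1omega
    {X : Type*} [NormedAddCommGroup X] [InnerProductSpace ℝ X] [CompleteSpace X]
    (ω : ℝ → ℝ) (hconc : ConcaveOn ℝ (Ici 0) ω) (hmono : MonotoneOn ω (Ici 0))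
    (hcont : ContinuousOn ω (Ici 0)) (h0 : ω 0 = 0) (hnonneg : ∀ t, 0 ≤ t → 0 ≤ ω t)
    (φ : X → ℝ) (hφ : ∀ x : X, φ x = ∫ s in (0:ℝ)..‖x‖, ω s) :
    Differentiable ℝ φ ∧
    (∀ x : X, x ≠ 0 → gradient φ x = ω ‖x‖ • (‖x‖⁻¹ • x)) ∧
    gradient φ 0 = 0 ∧
    (∀ x z : X, ‖gradient φ x - gradient φ z‖ ≤ 5 * ω ‖x - z‖) :=
  radial_primitive_C1omega_general ω hconc hmono hcont h0 φ hφ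
end

section
/- Let X be a real Hilbert space, B a bounded subset of X, and f : B → ℝ, G : B → X bounded functions. Let ω₁ : [0, ∞) → [0, ∞) be a concave, nondecreasing, continuous function with ω₁(0) = 0, set φ₁(t) = ∫₀^t ω₁(s) ds, and define g : X → ℝ by g(x) = inf_{y∈B} { f(y) + ⟨G(y), x − y⟩ + 2φ₁(‖x − y‖) }. Then g(x + h) + g(x − h) − 2g(x) ≤ 2φ₁(2‖h‖) for all x, h ∈ X. -/
open Set

local notation "⟪" x ", " y "⟫" => @inner ℝ _ _ x y


section Aux2

variable {ω : ℝ → ℝ}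

lemma aux_intInt' (hmono : MonotoneOn ω (Ici 0)) {a b : ℝ} (ha : 0 ≤ a) (hb : 0 ≤ b) :
    IntervalIntegrable ω MeasureTheory.volume a b := by
  apply MonotoneOn.intervalIntegrable
  apply hmono.mono
  intro t ht
  rw [mem_uIcc] at ht
  rcases ht with h' | h' <;> [exact le_trans ha h'.1; exact le_trans hb h'.1]

/-- nonnegativity of the primitive -/
lemma aux_phi_nonneg (hmono : MonotoneOn ω (Ici 0)) (hnonneg : ∀ t, 0 ≤ t → 0 ≤ ω t)
    {t : ℝ} (ht : 0 ≤ t) : 0 ≤ ∫ s in (0:ℝ)..t, ω s := by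
  apply intervalIntegral.integral_nonneg ht
  intro u hu
  exact hnonneg u hu.1

/-- doubling: 2∫₀^d ω ≤ ∫₀^{2d} ω -/
lemma aux_doubling (hmono : MonotoneOn ω (Ici 0)) {d : ℝ} (hd : 0 ≤ d) :
    2 * (∫ s in (0:ℝ)..d, ω s) ≤ ∫ s in (0:ℝ)..(2*d), ω s := by
  have h1 : IntervalIntegrable ω MeasureTheory.volume 0 d := aux_intInt' hmono le_rfl hd
  have h2 : IntervalIntegrable ω MeasureTheory.volume 0 (2*d) :=
    aux_intInt' hmono le_rfl (by linarith)
  have h3 : IntervalIntegrable ω MeasureTheory.volume d (2*d) :=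
    aux_intInt' hmono hd (by linarith)
  have hsub : (∫ s in (0:ℝ)..(2*d), ω s) - (∫ s in (0:ℝ)..d, ω s)
      = ∫ s in d..(2*d), ω s := intervalIntegral.integral_interval_sub_left h2 h1
  have hshift : (∫ s in (0:ℝ)..d, ω (s + d)) = ∫ s in d..(2*d), ω s := by
    rw [intervalIntegral.integral_comp_add_right]
    norm_num [two_mul]
  have hint' : IntervalIntegrable (fun s => ω (s + d)) MeasureTheory.volume 0 d := by
    have := h3.comp_add_right d
    simpa [two_mul] using this
  have hmono' : (∫ s in (0:ℝ)..d, ω s) ≤ ∫ s in (0:ℝ)..d, ω (s + d) := by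
    apply intervalIntegral.integral_mono_on hd h1 hint'
    intro u hu
    exact hmono (by exact hu.1) (by simp; linarith [hu.1]) (by linarith [hd])
  linarith [hshift ▸ hmono', hsub]

/-- Concavity increment inequality: for concave ψ on Ici 0,
    ψ (y+δ) - ψ y ≤ ψ (x+δ) - ψ x for 0 ≤ x ≤ y, 0 ≤ δ. -/
lemma aux_concave_increment {ψ : ℝ → ℝ} (hψ : ConcaveOn ℝ (Ici 0) ψ)
    {x y δ : ℝ} (hx : 0 ≤ x) (hxy : x ≤ y) (hδ : 0 ≤ δ) :
    ψ (y + δ) - ψ y ≤ ψ (x + δ) - ψ x := by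
  rcases eq_or_lt_of_le (show x ≤ y + δ by linarith) with heq | hlt
  · have hyx : y = x := le_antisymm (by linarith) hxy
    have hδ0 : δ = 0 := by linarith
    simp [hyx, hδ0]
  · set D := y + δ - x with hD
    have hD0 : 0 < D := by simp only [hD]; linarith
    set μ := (y - x) / D with hμ
    set ν := δ / D with hν
    have hμ0 : 0 ≤ μ := div_nonneg (by linarith) hD0.le
    have hν0 : 0 ≤ ν := div_nonneg hδ hD0.le
    have hμν : μ + ν = 1 := by rw [hμ, hν, ← add_div, div_eq_one_iff_eq hD0.ne', hD]; ring
    have h1 : μ • ψ (y + δ) + ν • ψ x ≤ ψ (μ • (y + δ) + ν • x) :=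
      hψ.2 (mem_Ici.mpr (by linarith)) (mem_Ici.mpr hx) hμ0 hν0 hμν
    have h2 : ν • ψ (y + δ) + μ • ψ x ≤ ψ (ν • (y + δ) + μ • x) :=
      hψ.2 (mem_Ici.mpr (by linarith)) (mem_Ici.mpr hx) hν0 hμ0 (by linarith)
    have e1 : μ • (y + δ) + ν • x = y := by
      simp only [smul_eq_mul, hμ, hν]; field_simp; ring
    have e2 : ν • (y + δ) + μ • x = x + δ := by
      simp only [smul_eq_mul, hμ, hν]; field_simp; ring
    rw [e1] at h1; rw [e2] at h2
    simp only [smul_eq_mul] at h1 h2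
    have hE : μ * ψ (y + δ) + ν * ψ x + (ν * ψ (y + δ) + μ * ψ x) = ψ (y + δ) + ψ x := by
      have hμ' : μ = 1 - ν := by linarith
      rw [hμ']; ring
    linarith [h1, h2, hE]

end Aux2

section Key

variable {ω : ℝ → ℝ}

/-- Continuity of the primitive on Ici 0. -/
lemma aux_primitive_cont (hmono : MonotoneOn ω (Ici 0)) :
    ContinuousOn (fun t => ∫ s in (0:ℝ)..t, ω s) (Ici 0) := by
  intro t ht
  have hI : IntervalIntegrable ω MeasureTheory.volume ((0:ℝ) ⊓ 0) ((0:ℝ) ⊔ (t+1)) := by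
    simp only [inf_idem]
    have : (0:ℝ) ⊔ (t+1) = t + 1 := by
      rw [sup_eq_right]; linarith [ht.out]
    rw [this]
    exact aux_intInt' hmono le_rfl (by linarith [ht.out])
  have h1 : ContinuousWithinAt (fun b => ∫ s in (0:ℝ)..b, ω s) (Icc 0 (t+1)) t :=
    intervalIntegral.continuousWithinAt_primitive (MeasureTheory.measure_singleton t) hI
  apply h1.mono_of_mem_nhdsWithin
  have : Ici (0:ℝ) ∩ Iic (t+1) ∈ nhdsWithin t (Ici 0) :=
    inter_mem_nhdsWithin _ (Iic_mem_nhds (by linarith [ht.out]))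
  exact Filter.mem_of_superset this (by rw [Ici_inter_Iic])

/-- ψ(t) = φ(√t) is concave on Ici 0. -/
lemma aux_psi_concave (hconc : ConcaveOn ℝ (Ici 0) ω) (hmono : MonotoneOn ω (Ici 0))
    (hcont : ContinuousOn ω (Ici 0)) (h0 : ω 0 = 0) :
    ConcaveOn ℝ (Ici 0) (fun t => ∫ s in (0:ℝ)..(Real.sqrt t), ω s) := by
  have hderiv : ∀ t : ℝ, 0 < t →
      HasDerivAt (fun u => ∫ s in (0:ℝ)..(Real.sqrt u), ω s)
        (ω (Real.sqrt t) * (1 / (2 * Real.sqrt t))) t := by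
    intro t ht
    have hst : 0 < Real.sqrt t := Real.sqrt_pos.mpr ht
    have hφ : HasDerivAt (fun u => ∫ s in (0:ℝ)..u, ω s) (ω (Real.sqrt t)) (Real.sqrt t) := by
      apply intervalIntegral.integral_hasDerivAt_right
        (aux_intInt' hmono le_rfl hst.le)
      · exact (hcont.mono Ioi_subset_Ici_self).stronglyMeasurableAtFilter isOpen_Ioi _ hst
      · exact hcont.continuousAt (Ici_mem_nhds hst)
    exact hφ.comp t (Real.hasDerivAt_sqrt ht.ne')
  apply AntitoneOn.concaveOn_of_deriv (convex_Ici 0)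
  · exact (aux_primitive_cont hmono).comp Real.continuous_sqrt.continuousOn
      (fun u _ => Real.sqrt_nonneg u)
  · rw [interior_Ici]
    intro t ht
    exact ((hderiv t ht).differentiableAt).differentiableWithinAt
  · rw [interior_Ici]
    intro s hs t ht hst
    rw [(hderiv s hs).deriv, (hderiv t ht).deriv]
    set p := Real.sqrt s with hp
    set q := Real.sqrt t with hq
    have hp0 : 0 < p := Real.sqrt_pos.mpr hs
    have hq0 : 0 < q := Real.sqrt_pos.mpr ht
    have hpq : p ≤ q := Real.sqrt_le_sqrt hst
    -- ω q / q ≤ ω p / p, i.e. p * ω q ≤ q * ω p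
    have hkey : p * ω q ≤ q * ω p := by
      have hcomb : (p/q) • ω q + (1 - p/q) • ω 0 ≤ ω ((p/q) • q + (1 - p/q) • 0) :=
        hconc.2 (mem_Ici.mpr hq0.le) (mem_Ici.mpr le_rfl)
          (by positivity) (by
            have : p / q ≤ 1 := (div_le_one hq0).mpr hpq
            linarith) (by ring)
      have hz : (p/q) • q + (1 - p/q) • (0:ℝ) = p := by
        simp only [smul_eq_mul, mul_zero, add_zero]; field_simp
      rw [hz, h0] at hcomb
      simp only [smul_eq_mul, mul_zero, add_zero] at hcomb
      have := mul_le_mul_of_nonneg_left hcomb hq0.le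
      calc p * ω q = q * (p / q * ω q) := by field_simp
        _ ≤ q * ω p := this
    have h2p : (0:ℝ) < 2 * p := by linarith
    have h2q : (0:ℝ) < 2 * q := by linarith
    rw [mul_one_div, mul_one_div, div_le_div_iff₀ h2q h2p]
    nlinarith [hkey]

/-- the key scalar inequality -/
lemma aux_key (hconc : ConcaveOn ℝ (Ici 0) ω) (hmono : MonotoneOn ω (Ici 0))
    (hcont : ContinuousOn ω (Ici 0)) (h0 : ω 0 = 0) (hnonneg : ∀ t, 0 ≤ t → 0 ≤ ω t)
    (φ : ℝ → ℝ) (hφ : ∀ t : ℝ, φ t = ∫ s in (0:ℝ)..t, ω s)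
    {a b c d : ℝ} (ha : 0 ≤ a) (hb : 0 ≤ b) (hc : 0 ≤ c) (hd : 0 ≤ d)
    (hpar : a^2 + b^2 = 2*c^2 + 2*d^2) : φ a + φ b - 2 * φ c ≤ φ (2*d) := by
  set ψ : ℝ → ℝ := fun t => ∫ s in (0:ℝ)..(Real.sqrt t), ω s with hψdef
  have hψ : ConcaveOn ℝ (Ici 0) ψ := aux_psi_concave hconc hmono hcont h0
  have hψa : ψ (a^2) = φ a := by rw [hψdef]; simp [Real.sqrt_sq ha, hφ]
  have hψb : ψ (b^2) = φ b := by rw [hψdef]; simp [Real.sqrt_sq hb, hφ]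
  have hψc : ψ (c^2) = φ c := by rw [hψdef]; simp [Real.sqrt_sq hc, hφ]
  have hψd : ψ (d^2) = φ d := by rw [hψdef]; simp [Real.sqrt_sq hd, hφ]
  have hψ0 : ψ 0 = 0 := by rw [hψdef]; simp
  -- wlog b ≤ a
  wlog hba : b ≤ a generalizing a b
  · have := this hb ha (by linarith) hψb hψa (le_of_not_ge hba)
    linarith [this]
  set m := c^2 + d^2 with hm
  have hbm : b^2 ≤ m := by nlinarith
  have ham : a^2 = m + (m - b^2) := by rw [hm]; nlinarith
  have h1 : ψ (m + (m - b^2)) - ψ m ≤ ψ (b^2 + (m - b^2)) - ψ (b^2) := by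
    apply aux_concave_increment hψ (by positivity) hbm (by linarith)
  rw [← ham] at h1
  have hb2m : b^2 + (m - b^2) = m := by ring
  rw [hb2m] at h1
  have h2 : ψ (c^2 + d^2) - ψ (c^2) ≤ ψ (0 + d^2) - ψ 0 :=
    aux_concave_increment hψ le_rfl (by positivity) (by positivity)
  rw [zero_add, hψ0, sub_zero] at h2
  have h3 : 2 * φ d ≤ φ (2*d) := by
    rw [hφ d, hφ (2*d)]
    exact aux_doubling hmono hd
  rw [hψa, hψb] at h1
  rw [hψd, ← hm, hψc] at h2
  linarith
end Key

/-- second-order estimate for the infimal function g. -/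
theorem g_second_order_estimate
    {X : Type*} [NormedAddCommGroup X] [InnerProductSpace ℝ X] [CompleteSpace X]
    (B : Set X) (hB : Bornology.IsBounded B)
    (f : X → ℝ) (G : X → X)
    (hfbd : ∃ Mf : ℝ, ∀ z ∈ B, |f z| ≤ Mf) (hGbd : ∃ MG : ℝ, ∀ z ∈ B, ‖G z‖ ≤ MG)
    (ω₁ : ℝ → ℝ) (hconc : ConcaveOn ℝ (Ici 0) ω₁) (hmono : MonotoneOn ω₁ (Ici 0))
    (hcont : ContinuousOn ω₁ (Ici 0)) (h0 : ω₁ 0 = 0) (hnonneg : ∀ t, 0 ≤ t → 0 ≤ ω₁ t)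
    (φ₁ : ℝ → ℝ) (hφ₁ : ∀ t : ℝ, φ₁ t = ∫ s in (0:ℝ)..t, ω₁ s)
    (g : X → ℝ)
    (hg : ∀ x : X, g x = sInf ((fun y => f y + ⟪G y, x - y⟫ + 2 * φ₁ ‖x - y‖) '' B)) :
    ∀ x h : X, g (x + h) + g (x - h) - 2 * g x ≤ 2 * φ₁ (2 * ‖h‖) := by
  intro x h
  have hφnonneg : ∀ t : ℝ, 0 ≤ t → 0 ≤ φ₁ t := fun t ht => by
    rw [hφ₁ t]; exact aux_phi_nonneg hmono hnonneg ht
  rcases B.eq_empty_or_nonempty with hBe | hBne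
  · rw [hg, hg, hg, hBe]
    simp only [image_empty, Real.sInf_empty]
    have := hφnonneg (2 * ‖h‖) (by positivity)
    linarith
  obtain ⟨Mf, hMf⟩ := hfbd
  obtain ⟨MG, hMG⟩ := hGbd
  have hMG0 : 0 ≤ MG := le_trans (norm_nonneg _) (hMG _ hBne.choose_spec)
  obtain ⟨r, hr⟩ := hB.subset_closedBall 0
  set v : X → X → ℝ := fun y z => f y + ⟪G y, z - y⟫ + 2 * φ₁ ‖z - y‖ with hv
  have hbdd : ∀ z : X, BddBelow ((fun y => v y z) '' B) := by
    intro z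
    refine ⟨-Mf - MG * (‖z‖ + r), ?_⟩
    rintro _ ⟨y, hy, rfl⟩
    have hfy : -Mf ≤ f y := by have := hMf y hy; cases abs_le.mp this; linarith
    have hiy : -(MG * (‖z‖ + r)) ≤ ⟪G y, z - y⟫ := by
      have h1 : |⟪G y, z - y⟫| ≤ ‖G y‖ * ‖z - y‖ := abs_real_inner_le_norm _ _
      have h2 : ‖z - y‖ ≤ ‖z‖ + r := by
        have := hr hy
        rw [Metric.mem_closedBall, dist_zero_right] at this
        calc ‖z - y‖ ≤ ‖z‖ + ‖y‖ := norm_sub_le _ _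
          _ ≤ ‖z‖ + r := by linarith
      have h3 : ‖G y‖ * ‖z - y‖ ≤ MG * (‖z‖ + r) :=
        mul_le_mul (hMG y hy) h2 (norm_nonneg _) hMG0
      have := neg_abs_le ⟪G y, z - y⟫
      linarith
    have hφy : 0 ≤ 2 * φ₁ ‖z - y‖ := by
      have := hφnonneg ‖z - y‖ (norm_nonneg _)
      linarith
    simp only [hv]
    linarith
  have hne : ∀ z : X, ((fun y => v y z) '' B).Nonempty := fun z => hBne.image _
  have hle : ∀ z : X, ∀ y ∈ B, g z ≤ v y z := by
    intro z y hy
    rw [hg z]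
    exact csInf_le (hbdd z) ⟨y, hy, rfl⟩
  -- per-y second order estimate
  have hpery : ∀ y : X, v y (x + h) + v y (x - h) - 2 * v y x ≤ 2 * φ₁ (2 * ‖h‖) := by
    intro y
    set u := x - y with hu
    have e1 : x + h - y = u + h := by rw [hu]; abel
    have e2 : x - h - y = u - h := by rw [hu]; abel
    have hinner : ⟪G y, u + h⟫ + ⟪G y, u - h⟫ - 2 * ⟪G y, u⟫ = 0 := by
      simp only [inner_add_right, inner_sub_right]; ring
    have hkey : φ₁ ‖u + h‖ + φ₁ ‖u - h‖ - 2 * φ₁ ‖u‖ ≤ φ₁ (2 * ‖h‖) := by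
      apply aux_key hconc hmono hcont h0 hnonneg φ₁ hφ₁
        (norm_nonneg _) (norm_nonneg _) (norm_nonneg _) (norm_nonneg _)
      have := parallelogram_law_with_norm ℝ u h
      nlinarith [this]
    simp only [hv, e1, e2, ← hu]
    nlinarith [hkey, hinner]
  -- conclude via ε-argument
  apply le_of_forall_pos_le_add
  intro ε hε
  obtain ⟨w, hw, hwlt⟩ := Real.lt_sInf_add_pos (hne x) (show (0:ℝ) < ε/2 by linarith)
  obtain ⟨y, hy, rfl⟩ := hw
  rw [← hg x] at hwlt
  have hwlt' : v y x < g x + ε / 2 := hwlt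
  clear_value v
  have h1 := hle (x + h) y hy
  have h2 := hle (x - h) y hy
  have h3 := hpery y
  linarith [hwlt', h1, h2, h3]
end

section
/- Let X be a real Hilbert space, B a subset of X, and f : B → ℝ, G : B → X bounded functions satisfying condition (C): f(x) ≥ f(y) + ⟨G(y), x − y⟩ for all x, y ∈ B. Define m : X → ℝ by m(x) = sup_{z∈B} { f(z) + ⟨G(z), x − z⟩ }. Then m is convex and Lipschitz with constant sup_{z∈B} ‖G(z)‖, m = f on B, and for every x ∈ B the vector G(x) belongs to the subdifferential ∂m(x), i.e., m(w) ≥ m(x) + ⟨G(x), w − x⟩ for all w ∈ X. -/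
/-!
Each `z ∈ B` contributes the affine function `x ↦ f z + ⟪G z, x - z⟫`, which is `‖G z‖`-Lipschitz
and, by (C), lies below `f` on `B`. Their pointwise supremum `m` is therefore convex and
`sup ‖G‖`-Lipschitz; it is finite because, by (C), every one of them is at most `f y₀` at a fixed
`y₀ ∈ B`. On `B` the supremum is attained by the function of `z = x` itself, so `m = f` there, and
then `m w ≥ f x + ⟪G x, w - x⟫ = m x + ⟪G x, w - x⟫` is the subgradient inequality.
-/

open Set

local notation "⟪" x ", " y "⟫" => @inner ℝ _ _ x y

section SupOfFamily

variable {ι E : Type*} {B : Set ι} {g : ι → E → ℝ}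

theorem ConvexOn.csSup_image [AddCommMonoid E] [Module ℝ E] {s : Set E} (hs : Convex ℝ s)
    (hg : ∀ i ∈ B, ConvexOn ℝ s (g i)) (hbdd : ∀ x ∈ s, BddAbove ((g · x) '' B)) :
    ConvexOn ℝ s (fun x => sSup ((g · x) '' B)) := by
  rcases B.eq_empty_or_nonempty with rfl | hB
  · simpa using convexOn_const (0 : ℝ) hs
  refine ⟨hs, fun x hx y hy a b ha hb hab => csSup_le (hB.image _) ?_⟩
  rintro _ ⟨i, hi, rfl⟩
  calc g i (a • x + b • y) ≤ a • g i x + b • g i y := (hg i hi).2 hx hy ha hb hab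
    _ ≤ a • sSup ((g · x) '' B) + b • sSup ((g · y) '' B) := by
      gcongr
      · exact le_csSup (hbdd x hx) (mem_image_of_mem _ hi)
      · exact le_csSup (hbdd y hy) (mem_image_of_mem _ hi)

theorem csSup_image_le_csSup_image_add {x y : E} {c : ℝ} (hB : B.Nonempty)
    (hbdd : BddAbove ((g · y) '' B)) (hg : ∀ i ∈ B, g i x ≤ g i y + c) :
    sSup ((g · x) '' B) ≤ sSup ((g · y) '' B) + c := by
  refine csSup_le (hB.image _) ?_
  rintro _ ⟨i, hi, rfl⟩
  exact (hg i hi).trans (by gcongr; exact le_csSup hbdd (mem_image_of_mem _ hi))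

end SupOfFamily

section MinimalExtension

variable {X : Type*} [NormedAddCommGroup X] [InnerProductSpace ℝ X] {B : Set X} {f : X → ℝ}
  {G : X → X}

def jetAffine (f : X → ℝ) (G : X → X) (z x : X) : ℝ := f z + ⟪G z, x - z⟫

noncomputable def minimalExtension (B : Set X) (f : X → ℝ) (G : X → X) (x : X) : ℝ :=
  sSup ((jetAffine f G · x) '' B)

theorem jetAffine_self (z : X) : jetAffine f G z z = f z := by
  simp [jetAffine]

theorem jetAffine_eq_add_inner (z x y : X) :
    jetAffine f G z x = jetAffine f G z y + ⟪G z, x - y⟫ := by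
  rw [jetAffine, jetAffine, add_assoc, ← inner_add_right, sub_add_sub_cancel']

theorem jetAffine_le_add_norm_mul (z x y : X) :
    jetAffine f G z x ≤ jetAffine f G z y + ‖G z‖ * ‖x - y‖ := by
  rw [jetAffine_eq_add_inner z x y]
  gcongr
  exact real_inner_le_norm _ _

theorem convexOn_jetAffine (z : X) : ConvexOn ℝ univ (jetAffine f G z) := by
  have h : jetAffine f G z = fun x => innerₛₗ ℝ (G z) x + (f z - ⟪G z, z⟫) := by
    ext x
    simp only [jetAffine, innerₛₗ_apply_apply, inner_sub_right]
    ring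
  exact h ▸ ((innerₛₗ ℝ (G z)).convexOn convex_univ).add_const _

variable (hC : ∀ x ∈ B, ∀ y ∈ B, jetAffine f G y x ≤ f x)
include hC

theorem isGreatest_jetAffine_image {x : X} (hx : x ∈ B) :
    IsGreatest ((jetAffine f G · x) '' B) (f x) := by
  refine ⟨⟨x, hx, jetAffine_self x⟩, ?_⟩
  rintro _ ⟨z, hz, rfl⟩
  exact hC x hx z hz

theorem minimalExtension_eq_of_mem {x : X} (hx : x ∈ B) : minimalExtension B f G x = f x :=
  (isGreatest_jetAffine_image hC hx).csSup_eq

theorem bddAbove_jetAffine_image {M : ℝ} (hM : ∀ z ∈ B, ‖G z‖ ≤ M) (x : X) :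
    BddAbove ((jetAffine f G · x) '' B) := by
  rcases B.eq_empty_or_nonempty with rfl | ⟨y, hy⟩
  · simp
  refine ⟨f y + M * ‖x - y‖, ?_⟩
  rintro _ ⟨z, hz, rfl⟩
  calc jetAffine f G z x ≤ jetAffine f G z y + ‖G z‖ * ‖x - y‖ := jetAffine_le_add_norm_mul z x y
    _ ≤ f y + M * ‖x - y‖ := by
      gcongr
      exacts [(isGreatest_jetAffine_image hC hy).2 (mem_image_of_mem _ hz), hM z hz]

theorem jetAffine_le_minimalExtension {M : ℝ} (hM : ∀ z ∈ B, ‖G z‖ ≤ M) {z : X} (hz : z ∈ B)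
    (x : X) : jetAffine f G z x ≤ minimalExtension B f G x :=
  le_csSup (bddAbove_jetAffine_image hC hM x) (mem_image_of_mem _ hz)

theorem convexOn_minimalExtension {M : ℝ} (hM : ∀ z ∈ B, ‖G z‖ ≤ M) :
    ConvexOn ℝ univ (minimalExtension B f G) :=
  .csSup_image convex_univ (fun z _ => convexOn_jetAffine z)
    (fun x _ => bddAbove_jetAffine_image hC hM x)

theorem minimalExtension_le_add_mul_norm {M : ℝ} (hM : ∀ z ∈ B, ‖G z‖ ≤ M) (x y : X) :
    minimalExtension B f G x ≤
      minimalExtension B f G y + sSup ((‖G ·‖) '' B) * ‖x - y‖ := by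
  rcases B.eq_empty_or_nonempty with rfl | hB
  · simp [minimalExtension]
  have hG : BddAbove ((‖G ·‖) '' B) := ⟨M, by rintro _ ⟨z, hz, rfl⟩; exact hM z hz⟩
  refine csSup_image_le_csSup_image_add hB (bddAbove_jetAffine_image hC hM y) fun z hz => ?_
  calc jetAffine f G z x ≤ jetAffine f G z y + ‖G z‖ * ‖x - y‖ := jetAffine_le_add_norm_mul z x y
    _ ≤ jetAffine f G z y + sSup ((‖G ·‖) '' B) * ‖x - y‖ := by
      gcongr
      exact le_csSup hG (mem_image_of_mem _ hz)

theorem abs_minimalExtension_sub_le {M : ℝ} (hM : ∀ z ∈ B, ‖G z‖ ≤ M) (x y : X) :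
    |minimalExtension B f G x - minimalExtension B f G y| ≤
      sSup ((‖G ·‖) '' B) * ‖x - y‖ := by
  have hxy := minimalExtension_le_add_mul_norm hC hM x y
  have hyx := minimalExtension_le_add_mul_norm hC hM y x
  rw [norm_sub_rev] at hyx
  exact abs_sub_le_iff.2 ⟨by linarith, by linarith⟩

theorem minimalExtension_subgradient {M : ℝ} (hM : ∀ z ∈ B, ‖G z‖ ≤ M) {x : X} (hx : x ∈ B)
    (w : X) : minimalExtension B f G x + ⟪G x, w - x⟫ ≤ minimalExtension B f G w := by
  rw [minimalExtension_eq_of_mem hC hx]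
  exact jetAffine_le_minimalExtension hC hM hx w

end MinimalExtension

theorem minimal_extension_properties_general
    {X : Type*} [NormedAddCommGroup X] [InnerProductSpace ℝ X]
    (B : Set X) (f : X → ℝ) (G : X → X)
    (hGbd : ∃ MG : ℝ, ∀ z ∈ B, ‖G z‖ ≤ MG)
    (hC : ∀ x ∈ B, ∀ y ∈ B, f x ≥ f y + ⟪G y, x - y⟫)
    (m : X → ℝ) (hm : ∀ x : X, m x = sSup ((fun z => f z + ⟪G z, x - z⟫) '' B)) :
    ConvexOn ℝ univ m ∧
    (∀ x x' : X, |m x - m x'| ≤ sSup ((fun z => ‖G z‖) '' B) * ‖x - x'‖) ∧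
    (∀ x ∈ B, m x = f x) ∧
    (∀ x ∈ B, ∀ w : X, m w ≥ m x + ⟪G x, w - x⟫) := by
  obtain ⟨M, hM⟩ := hGbd
  obtain rfl : m = minimalExtension B f G := funext hm
  exact ⟨convexOn_minimalExtension hC hM, abs_minimalExtension_sub_le hC hM,
    fun x hx => minimalExtension_eq_of_mem hC hx, fun x hx => minimalExtension_subgradient hC hM hx⟩

/-- properties of the minimal extension m of the jet (f, G). -/
theorem minimal_extension_properties
    {X : Type*} [NormedAddCommGroup X] [InnerProductSpace ℝ X] [CompleteSpace X]
    (B : Set X) (f : X → ℝ) (G : X → X)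
    (hfbd : ∃ Mf : ℝ, ∀ z ∈ B, |f z| ≤ Mf) (hGbd : ∃ MG : ℝ, ∀ z ∈ B, ‖G z‖ ≤ MG)
    (hC : ∀ x ∈ B, ∀ y ∈ B, f x ≥ f y + ⟪G y, x - y⟫)
    (m : X → ℝ) (hm : ∀ x : X, m x = sSup ((fun z => f z + ⟪G z, x - z⟫) '' B)) :
    ConvexOn ℝ univ m ∧
    (∀ x x' : X, |m x - m x'| ≤ sSup ((fun z => ‖G z‖) '' B) * ‖x - x'‖) ∧
    (∀ x ∈ B, m x = f x) ∧
    (∀ x ∈ B, ∀ w : X, m w ≥ m x + ⟪G x, w - x⟫) :=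
  minimal_extension_properties_general B f G hGbd hC m hm
end

section
/- Let X be a real Hilbert space, B a bounded subset of X, and f : B → ℝ, G : B → X functions with G bounded, satisfying condition (C): f(x) ≥ f(y) + ⟨G(y), x − y⟩ for all x, y ∈ B, and condition (SCW¹): for all sequences (x_n), (y_n) in B, if f(x_n) − f(y_n) − ⟨G(y_n), x_n − y_n⟩ → 0 then G(x_n) − G(y_n) → 0. Then there exist a concave, nondecreasing, continuous function ω : [0, ∞) → [0, ∞) with ω(0) = 0, a constant M > 0, and a convex differentiable function F : X → ℝ such that F = f on B, ∇F = G on B, and ‖∇F(x) − ∇F(z)‖ ≤ M·ω(‖x − z‖) for all x, z ∈ X (i.e., F ∈ C^{1,ω}(X)). -/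
/-!
Condition (SCW¹) makes `θ r := sup_{x, y ∈ B} (‖G x - G y‖ - taylorGap f G x y / r)` tend
to `0` as `r → 0⁺`; (C) makes the Taylor gaps nonnegative, so with `‖G‖ ≤ L` also
`θ ≤ 2L`. Let `ω` be a concave modulus with `2θ ≤ ω` (the infimum of the affine majorants of
`2θ`) and `φ r = ∫₀ʳ ω`, so that `r θ r ≤ φ r`. This is precisely what makes every tangent plane
`f z + ⟪G z, · - z⟫` (`z ∈ B`) lie below every cone `f y + ⟪G y, · - y⟫ + φ ‖· - y‖` (`y ∈ B`).
The infimum `m` of the cones therefore lies above all tangent planes and equals `f` on `B`, and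
because `φ ‖·‖` has second differences `O(t ω t)`, so does `m`. The convex envelope `F` of `m`
inherits all of this. Finally, a convex Lipschitz `F` with
`F (x + h) + F (x - h) - 2 F x ≤ ‖h‖ ρ ‖h‖`, `ρ → 0`, is differentiable — its one-sided
directional derivatives are odd, hence linear — and comparing tangent planes at `x` and `z`
gives `‖∇F x - ∇F z‖ ≤ 2 ρ ‖x - z‖`.
-/

open Set Filter Topology

local notation "⟪" x ", " y "⟫" => @inner ℝ _ _ x y

structure IsConcaveModulus (ω : ℝ → ℝ) : Prop where
  concaveOn : ConcaveOn ℝ (Ici 0) ω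
  monotoneOn : MonotoneOn ω (Ici 0)
  continuousOn : ContinuousOn ω (Ici 0)
  map_zero : ω 0 = 0
  nonneg : ∀ t, 0 ≤ t → 0 ≤ ω t

namespace IsConcaveModulus

variable {ω : ℝ → ℝ}

lemma mul_apply_le_mul_apply (hω : IsConcaveModulus ω) {t r : ℝ} (ht : 0 ≤ t) (htr : t ≤ r) :
    t * ω r ≤ r * ω t := by
  rcases ht.eq_or_lt with rfl | ht
  · simp [hω.map_zero]
  have hr : 0 < r := ht.trans_le htr
  have key := hω.concaveOn.2 (mem_Ici.2 le_rfl) (mem_Ici.2 hr.le)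
    (sub_nonneg.2 ((div_le_one hr).2 htr)) (div_nonneg ht.le hr.le) (sub_add_cancel 1 (t / r))
  simp only [smul_eq_mul, mul_zero, zero_add, hω.map_zero, div_mul_cancel₀ t hr.ne'] at key
  rw [div_mul_eq_mul_div, div_le_iff₀ hr] at key
  linarith

lemma map_add_le (hω : IsConcaveModulus ω) {s t : ℝ} (hs : 0 ≤ s) (ht : 0 ≤ t) :
    ω (s + t) ≤ ω s + ω t := by
  rcases (add_nonneg hs ht).eq_or_lt with h | h
  · obtain ⟨rfl, rfl⟩ : s = 0 ∧ t = 0 := ⟨by linarith, by linarith⟩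
    simp [hω.map_zero]
  have h1 := hω.mul_apply_le_mul_apply hs (le_add_of_nonneg_right ht)
  have h2 := hω.mul_apply_le_mul_apply ht (le_add_of_nonneg_left hs)
  exact le_of_mul_le_mul_left (by linarith) h

lemma tendsto_nhdsGE_zero (hω : IsConcaveModulus ω) : Tendsto ω (𝓝[≥] 0) (𝓝 0) := by
  have := hω.continuousOn 0 (mem_Ici.2 le_rfl)
  rwa [ContinuousWithinAt, hω.map_zero] at this

lemma intervalIntegrable (hω : IsConcaveModulus ω) {a b : ℝ} (ha : 0 ≤ a) (hb : 0 ≤ b) :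
    IntervalIntegrable ω MeasureTheory.volume a b :=
  (hω.monotoneOn.mono fun _ hs => le_trans (le_min ha hb) hs.1).intervalIntegrable

end IsConcaveModulus

section ConcaveMajorant

def affineMajorants (θ : ℝ → ℝ) : Set (ℝ × ℝ) :=
  {p | 0 ≤ p.1 ∧ 0 ≤ p.2 ∧ ∀ r, 0 < r → θ r ≤ p.1 * r + p.2}

noncomputable def concaveMajorant (θ : ℝ → ℝ) (t : ℝ) : ℝ :=
  ⨅ p : affineMajorants θ, p.1.1 * t + p.1.2

variable {θ : ℝ → ℝ} {K : ℝ}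

lemma concaveMajorant_le {p : ℝ × ℝ} (hp : p ∈ affineMajorants θ) {t : ℝ} (ht : 0 ≤ t) :
    concaveMajorant θ t ≤ p.1 * t + p.2 :=
  ciInf_le ⟨0, forall_mem_range.2 fun q : affineMajorants θ =>
    add_nonneg (mul_nonneg q.2.1 ht) q.2.2.1⟩ ⟨p, hp⟩

lemma le_concaveMajorant (hne : (affineMajorants θ).Nonempty) {c t : ℝ}
    (h : ∀ p ∈ affineMajorants θ, c ≤ p.1 * t + p.2) : c ≤ concaveMajorant θ t :=
  have := hne.to_subtype
  le_ciInf fun p => h p.1 p.2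

lemma isConcaveModulus_concaveMajorant (hne : (affineMajorants θ).Nonempty)
    (hsmall : ∀ ε > 0, ∃ a, (a, ε) ∈ affineMajorants θ) :
    IsConcaveModulus (concaveMajorant θ) := by
  have nonneg : ∀ t, 0 ≤ t → 0 ≤ concaveMajorant θ t := fun t ht =>
    le_concaveMajorant hne fun p hp => add_nonneg (mul_nonneg hp.1 ht) hp.2.1
  have map_zero : concaveMajorant θ 0 = 0 := by
    refine le_antisymm (le_of_forall_pos_le_add fun ε hε => ?_) (nonneg 0 le_rfl)
    obtain ⟨a, ha⟩ := hsmall ε hε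
    simpa using concaveMajorant_le ha le_rfl
  have concaveOn : ConcaveOn ℝ (Ici 0) (concaveMajorant θ) := by
    refine ⟨convex_Ici 0, fun x hx y hy a b ha hb hab => le_concaveMajorant hne fun p hp => ?_⟩
    have hpx := mul_le_mul_of_nonneg_left (concaveMajorant_le hp hx) ha
    have hpy := mul_le_mul_of_nonneg_left (concaveMajorant_le hp hy) hb
    simp only [smul_eq_mul]
    linear_combination hpx + hpy + p.2 * hab
  refine ⟨concaveOn, fun s hs t _ hst => le_concaveMajorant hne fun p hp =>
    (concaveMajorant_le hp hs).trans (by nlinarith [hp.1]), concaveOn.continuousOn_Ici ?_,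
    map_zero, nonneg⟩
  rw [Metric.continuousWithinAt_iff]
  intro ε hε
  obtain ⟨a, ha⟩ := hsmall (ε / 2) (half_pos hε)
  refine ⟨ε / (2 * (a + 1)), by have := ha.1; positivity, fun {t} ht hdist => ?_⟩
  rw [Real.dist_0_eq_abs, abs_of_nonneg (mem_Ici.1 ht)] at hdist
  rw [map_zero, Real.dist_0_eq_abs, abs_of_nonneg (nonneg t ht)]
  have hat : a * t < ε / 2 := by
    rw [lt_div_iff₀ (by linarith [ha.1])] at hdist
    nlinarith [ha.1, mem_Ici.1 ht]
  linarith [concaveMajorant_le ha ht]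

lemma exists_isConcaveModulus_ge (hK : 0 ≤ K) (hθK : ∀ r, 0 < r → θ r ≤ K)
    (hθ0 : ∀ ε > 0, ∃ δ > 0, ∀ r, 0 < r → r ≤ δ → θ r ≤ ε) :
    ∃ ω, IsConcaveModulus ω ∧ (∀ t, 0 ≤ t → ω t ≤ K) ∧ ∀ r, 0 < r → θ r ≤ ω r := by
  have hK_mem : ((0 : ℝ), K) ∈ affineMajorants θ :=
    ⟨le_rfl, hK, fun r hr => by simpa using hθK r hr⟩
  have hsmall : ∀ ε > 0, ∃ a, (a, ε) ∈ affineMajorants θ := by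
    intro ε hε
    obtain ⟨δ, hδ, hθδ⟩ := hθ0 ε hε
    refine ⟨K / δ, div_nonneg hK hδ.le, hε.le, fun r hr => ?_⟩
    rcases le_or_gt r δ with hrδ | hδr
    · nlinarith [hθδ r hr hrδ, div_nonneg hK hδ.le]
    · have : K ≤ K / δ * r := by
        rw [div_mul_eq_mul_div, le_div_iff₀ hδ]
        nlinarith
      linarith [hθK r hr]
  refine ⟨concaveMajorant θ, isConcaveModulus_concaveMajorant ⟨_, hK_mem⟩ hsmall,
    fun t ht => by simpa using concaveMajorant_le hK_mem ht,
    fun r hr => le_concaveMajorant ⟨_, hK_mem⟩ fun p hp => hp.2.2 r hr⟩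

end ConcaveMajorant

noncomputable def modulusPrimitive (ω : ℝ → ℝ) (r : ℝ) : ℝ := ∫ s in (0 : ℝ)..r, ω s

namespace IsConcaveModulus

variable {ω : ℝ → ℝ}

local notation "P" => modulusPrimitive ω

lemma primitive_sub_primitive (hω : IsConcaveModulus ω) {a c : ℝ} (ha : 0 ≤ a) (hc : 0 ≤ c) :
    P a - P c = ∫ s in c..a, ω s :=
  intervalIntegral.integral_interval_sub_left (hω.intervalIntegrable le_rfl ha)
    (hω.intervalIntegrable le_rfl hc)

lemma mul_sub_le_primitive_sub (hω : IsConcaveModulus ω) {a c : ℝ} (ha : 0 ≤ a)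
    (hc : 0 ≤ c) : ω c * (a - c) ≤ P a - P c := by
  rw [hω.primitive_sub_primitive ha hc]
  rcases le_total c a with hca | hac
  · have := intervalIntegral.integral_mono_on hca intervalIntegrable_const
      (hω.intervalIntegrable hc ha) fun s hs => hω.monotoneOn hc (hc.trans hs.1) hs.1
    simpa [mul_comm] using this
  · have := intervalIntegral.integral_mono_on hac (hω.intervalIntegrable ha hc)
      intervalIntegrable_const fun s hs => hω.monotoneOn (ha.trans hs.1) hc hs.2
    rw [intervalIntegral.integral_symm]
    simp only [intervalIntegral.integral_const, smul_eq_mul] at this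
    linarith

lemma mul_le_two_mul_primitive (hω : IsConcaveModulus ω) {r : ℝ} (hr : 0 ≤ r) :
    r * ω r ≤ 2 * P r := by
  rcases hr.eq_or_lt with rfl | hr
  · simp [modulusPrimitive]
  have key : ∫ s in (0 : ℝ)..r, s * (ω r / r) ≤ P r :=
    intervalIntegral.integral_mono_on hr.le (by apply Continuous.intervalIntegrable; fun_prop)
      (hω.intervalIntegrable le_rfl hr.le) fun s hs => by
        rw [← mul_div_assoc, div_le_iff₀ hr]
        exact (hω.mul_apply_le_mul_apply hs.1 hs.2).trans_eq (mul_comm _ _)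
  have hint : ∫ s in (0 : ℝ)..r, s * (ω r / r) = r * ω r / 2 := by
    rw [intervalIntegral.integral_mul_const, integral_id]
    field_simp
    ring
  linarith

lemma primitive_sub_le (hω : IsConcaveModulus ω) {K : ℝ} (hωK : ∀ t, 0 ≤ t → ω t ≤ K)
    {a b : ℝ} (ha : 0 ≤ a) (hb : 0 ≤ b) : P b - P a ≤ K * |b - a| := by
  have h := hω.mul_sub_le_primitive_sub ha hb
  rcases le_total a b with hab | hba
  · rw [abs_of_nonneg (sub_nonneg.2 hab)]
    nlinarith [hωK b hb]
  · nlinarith [hω.nonneg b hb, abs_nonneg (b - a), hωK b hb]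

lemma apply_mul_add_sub_le (hω : IsConcaveModulus ω) {a b c t : ℝ} (ha : 0 ≤ a)
    (hc : 0 ≤ c) (ht : 0 ≤ t) (hcb : c ≤ b) (hb : b ≤ a + t)
    (hpar : b ^ 2 + c ^ 2 = 2 * a ^ 2 + 2 * t ^ 2) :
    ω b * (b + c - 2 * a) ≤ 2 * (t * ω t) := by
  have hb0 : 0 ≤ b := hc.trans hcb
  rcases le_or_gt (b + c) (2 * a) with hneg | hpos
  · nlinarith [hω.nonneg b hb0, hω.nonneg t ht]
  have htpos : 0 < t := by nlinarith
  have hmono : ω b ≤ ω (a + t) := hω.monotoneOn hb0 (mem_Ici.2 (by positivity)) hb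
  have hchord : t * ω (a + t) ≤ (a + t) * ω t := hω.mul_apply_le_mul_apply ht (by linarith)
  -- `b + c - 2a ≤ 2t² / (a + t)`, from `(b + c)² ≤ 2 (b² + c²) = 4 (a² + t²)`
  have hsum : (b + c - 2 * a) * (a + t) ≤ 2 * t ^ 2 := by
    rcases le_or_gt (2 * t) (b + c) with h | h <;> nlinarith
  refine le_of_mul_le_mul_left ?_ htpos
  calc t * (ω b * (b + c - 2 * a)) ≤ t * ω (a + t) * (b + c - 2 * a) := by
        have := mul_le_mul_of_nonneg_left hmono ht
        nlinarith
    _ ≤ (a + t) * ω t * (b + c - 2 * a) := by nlinarith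
    _ ≤ t * (2 * (t * ω t)) := by nlinarith [hω.nonneg t ht]

lemma primitive_add_primitive_le (hω : IsConcaveModulus ω) {a b c t : ℝ} (ha : 0 ≤ a)
    (hc : 0 ≤ c) (ht : 0 ≤ t) (hcb : c ≤ b) (hb : b ≤ a + t) (hac : a ≤ c + t)
    (hpar : b ^ 2 + c ^ 2 = 2 * a ^ 2 + 2 * t ^ 2) :
    P b + P c ≤ 2 * P a + t * (4 * ω t) := by
  have hb0 : 0 ≤ b := hc.trans hcb
  have hPb := hω.mul_sub_le_primitive_sub ha hb0
  have hPc := hω.mul_sub_le_primitive_sub ha hc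
  have hmain := hω.apply_mul_add_sub_le ha hc ht hcb hb hpar
  -- the supporting slopes at `b` and `c` leave `ω b (b + c - 2a) + (ω b - ω c) (a - c)`
  have hcorr : (ω b - ω c) * (a - c) ≤ 2 * (t * ω t) := by
    rcases le_or_gt a c with hac' | hca
    · nlinarith [hω.monotoneOn hc hb0 hcb, hω.nonneg t ht]
    have hsub : ω b ≤ ω c + 2 * ω t := by
      calc ω b = ω (c + (b - c)) := by ring_nf
        _ ≤ ω c + ω (b - c) := hω.map_add_le hc (by linarith)
        _ ≤ ω c + ω (t + t) := by
          gcongr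
          exact hω.monotoneOn (mem_Ici.2 (by linarith)) (mem_Ici.2 (by linarith)) (by linarith)
        _ ≤ ω c + 2 * ω t := by linarith [hω.map_add_le ht ht]
    nlinarith [hω.nonneg t ht]
  nlinarith

lemma primitive_norm_add_add_norm_sub_le {E : Type*} [NormedAddCommGroup E]
    [InnerProductSpace ℝ E] (hω : IsConcaveModulus ω) (u h : E) :
    P ‖u + h‖ + P ‖u - h‖ ≤ 2 * P ‖u‖ + ‖h‖ * (4 * ω ‖h‖) := by
  have hpar : ‖u + h‖ ^ 2 + ‖u - h‖ ^ 2 = 2 * ‖u‖ ^ 2 + 2 * ‖h‖ ^ 2 := by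
    linarith [parallelogram_law_with_norm ℝ u h, sq ‖u + h‖, sq ‖u - h‖, sq ‖u‖, sq ‖h‖]
  have h1 : ‖u‖ ≤ ‖u + h‖ + ‖h‖ := by simpa using norm_sub_le (u + h) h
  have h2 : ‖u‖ ≤ ‖u - h‖ + ‖h‖ := by simpa using norm_add_le (u - h) h
  rcases le_total ‖u - h‖ ‖u + h‖ with hle | hle
  · exact hω.primitive_add_primitive_le (norm_nonneg u) (norm_nonneg _) (norm_nonneg h) hle
      (norm_add_le u h) h2 hpar
  · have := hω.primitive_add_primitive_le (norm_nonneg u) (norm_nonneg _) (norm_nonneg h) hle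
      (norm_sub_le u h) h1 (by linarith)
    linarith

end IsConcaveModulus

section ConvexEnvelope

variable {E : Type*} [AddCommGroup E] [Module ℝ E] {g : E → ℝ}

noncomputable def convexEnvelope (g : E → ℝ) (x : E) : ℝ :=
  ⨆ φ : {φ : E → ℝ // ConvexOn ℝ univ φ ∧ φ ≤ g}, φ.1 x

lemma le_convexEnvelope {φ : E → ℝ} (hφ : ConvexOn ℝ univ φ) (hφg : φ ≤ g) (x : E) :
    φ x ≤ convexEnvelope g x :=
  le_ciSup (f := fun φ : {φ : E → ℝ // ConvexOn ℝ univ φ ∧ φ ≤ g} => φ.1 x)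
    ⟨g x, forall_mem_range.2 fun φ => φ.2.2 x⟩ ⟨φ, hφ, hφg⟩

lemma convexEnvelope_le (hg : ∃ φ, ConvexOn ℝ univ φ ∧ φ ≤ g) (x : E) :
    convexEnvelope g x ≤ g x :=
  have : Nonempty {φ : E → ℝ // ConvexOn ℝ univ φ ∧ φ ≤ g} := nonempty_subtype.2 hg
  ciSup_le fun φ => φ.2.2 x

lemma convexOn_convexEnvelope (hg : ∃ φ, ConvexOn ℝ univ φ ∧ φ ≤ g) :
    ConvexOn ℝ univ (convexEnvelope g) := by
  have : Nonempty {φ : E → ℝ // ConvexOn ℝ univ φ ∧ φ ≤ g} := nonempty_subtype.2 hg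
  refine ⟨convex_univ, fun x _ y _ a b ha hb hab => ciSup_le fun φ => ?_⟩
  refine (φ.2.1.2 trivial trivial ha hb hab).trans ?_
  simp only [smul_eq_mul]
  gcongr <;> exact le_convexEnvelope φ.2.1 φ.2.2 _

lemma convexEnvelope_add_le (hg : ∃ φ, ConvexOn ℝ univ φ ∧ φ ≤ g) {h : E} {c : ℝ}
    (hgh : ∀ x, g (x + h) ≤ g x + c) (x : E) :
    convexEnvelope g (x + h) ≤ convexEnvelope g x + c := by
  have hψ : ConvexOn ℝ univ fun y => convexEnvelope g (y + h) + -c :=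
    ((convexOn_convexEnvelope hg).translate_left h).add_const (-c)
  have := le_convexEnvelope (g := g) hψ
    (fun y => by linarith [convexEnvelope_le hg (y + h), hgh y]) x
  linarith

lemma convexEnvelope_add_add_le (hg : ∃ φ, ConvexOn ℝ univ φ ∧ φ ≤ g) {h : E} {c : ℝ}
    (hgh : ∀ x, g (x + h) + g (x - h) ≤ 2 * g x + c) (x : E) :
    convexEnvelope g (x + h) + convexEnvelope g (x - h) ≤ 2 * convexEnvelope g x + c := by
  have hconv := convexOn_convexEnvelope hg
  have hψ : ConvexOn ℝ univ fun y =>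
      (2 : ℝ)⁻¹ • (convexEnvelope g (y + h) + convexEnvelope g (y + -h) + -c) :=
    (((hconv.translate_left h).add (hconv.translate_left (-h))).add_const (-c)).smul (by norm_num)
  have := le_convexEnvelope (g := g) hψ (fun y => by
    simp only [smul_eq_mul, ← sub_eq_add_neg]
    linarith [convexEnvelope_le hg (y + h), convexEnvelope_le hg (y - h), hgh y]) x
  simp only [smul_eq_mul, ← sub_eq_add_neg] at this
  linarith

end ConvexEnvelope

section LineDerivative

variable {E : Type*} [AddCommGroup E] [Module ℝ E] {F : E → ℝ}

noncomputable def rightLineDeriv (F : E → ℝ) (x u : E) : ℝ :=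
  derivWithin (fun t : ℝ => F (x + t • u)) (Ioi 0) 0

lemma ConvexOn.comp_line (hF : ConvexOn ℝ univ F) (x u : E) :
    ConvexOn ℝ univ fun t : ℝ => F (x + t • u) := by
  refine ⟨convex_univ, fun s _ t _ a b ha hb hab => ?_⟩
  convert hF.2 (mem_univ (x + s • u)) (mem_univ (x + t • u)) ha hb hab using 2
  conv_lhs => rw [← one_smul ℝ x, ← hab]
  simp only [smul_eq_mul]
  module

lemma ConvexOn.tendsto_rightLineDeriv (hF : ConvexOn ℝ univ F) (x u : E) :
    Tendsto (fun t : ℝ => (F (x + t • u) - F x) / t) (𝓝[>] 0) (𝓝 (rightLineDeriv F x u)) := by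
  have h := (hF.comp_line x u).hasDerivWithinAt_rightDeriv_of_mem_interior (x := 0) (by simp)
  rw [hasDerivWithinAt_iff_tendsto_slope' self_notMem_Ioi] at h
  refine h.congr fun t => ?_
  simp [slope_def_field]

lemma ConvexOn.rightLineDeriv_le_sub (hF : ConvexOn ℝ univ F) (x u : E) :
    rightLineDeriv F x u ≤ F (x + u) - F x := by
  have := (hF.comp_line x u).rightDeriv_le_slope_of_mem_interior (x := 0) (by simp) (mem_univ 1)
    one_pos
  simpa [rightLineDeriv, slope_def_field] using this

lemma ConvexOn.rightLineDeriv_midpoint_le (hF : ConvexOn ℝ univ F) (x a b : E) :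
    rightLineDeriv F x ((2 : ℝ)⁻¹ • (a + b))
      ≤ (rightLineDeriv F x a + rightLineDeriv F x b) / 2 := by
  refine le_of_tendsto_of_tendsto (hF.tendsto_rightLineDeriv x _)
    (((hF.tendsto_rightLineDeriv x a).add (hF.tendsto_rightLineDeriv x b)).div_const 2) ?_
  filter_upwards [self_mem_nhdsWithin] with t (ht : 0 < t)
  have key := hF.2 (mem_univ (x + t • a)) (mem_univ (x + t • b)) (by norm_num : (0 : ℝ) ≤ 2⁻¹)
    (by norm_num : (0 : ℝ) ≤ 2⁻¹) (by norm_num)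
  rw [show (2 : ℝ)⁻¹ • (x + t • a) + (2 : ℝ)⁻¹ • (x + t • b)
      = x + t • ((2 : ℝ)⁻¹ • (a + b)) by module, smul_eq_mul, smul_eq_mul] at key
  calc (F (x + t • ((2 : ℝ)⁻¹ • (a + b))) - F x) / t
      ≤ ((F (x + t • a) - F x + (F (x + t • b) - F x)) / 2) / t := by gcongr; linarith
    _ = ((F (x + t • a) - F x) / t + (F (x + t • b) - F x) / t) / 2 := by ring

lemma map_add_of_midpoint_le {D : E → ℝ} (h0 : D 0 = 0)
    (hmid : ∀ a b, D ((2 : ℝ)⁻¹ • (a + b)) ≤ (D a + D b) / 2) (hodd : ∀ a, D a + D (-a) ≤ 0)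
    (a b : E) : D (a + b) = D a + D b := by
  have hneg : ∀ a, D (-a) = -D a := fun a => by
    have := hmid a (-a)
    rw [add_neg_cancel, smul_zero, h0] at this
    linarith [hodd a]
  have hmid_eq : ∀ a b, D ((2 : ℝ)⁻¹ • (a + b)) = (D a + D b) / 2 := fun a b => by
    have := hmid (-a) (-b)
    rw [← neg_add, smul_neg, hneg, hneg, hneg] at this
    linarith [hmid a b]
  have hhalf := hmid_eq (a + b) 0
  rw [add_zero, h0] at hhalf
  linarith [hmid_eq a b]

end LineDerivative

section SecondDifference

variable {E : Type*} [NormedAddCommGroup E] [NormedSpace ℝ E] {F : E → ℝ} {ρ : ℝ → ℝ} {x : E}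

lemma ConvexOn.rightLineDeriv_add_neg_le (hF : ConvexOn ℝ univ F)
    (hsym : ∀ h, F (x + h) + F (x - h) ≤ 2 * F x + ‖h‖ * ρ ‖h‖) (hρ : Tendsto ρ (𝓝[≥] 0) (𝓝 0))
    (u : E) : rightLineDeriv F x u + rightLineDeriv F x (-u) ≤ 0 := by
  have hscale : Tendsto (fun t : ℝ => t * ‖u‖) (𝓝[>] 0) (𝓝[≥] 0) :=
    tendsto_nhdsWithin_iff.2
      ⟨((continuous_mul_const ‖u‖).tendsto' 0 0 (zero_mul _)).mono_left nhdsWithin_le_nhds,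
        eventually_nhdsWithin_of_forall fun t (ht : 0 < t) => mul_nonneg ht.le (norm_nonneg u)⟩
  refine le_of_tendsto_of_tendsto
    ((hF.tendsto_rightLineDeriv x u).add (hF.tendsto_rightLineDeriv x (-u)))
    (by simpa using (hρ.comp hscale).const_mul ‖u‖) ?_
  filter_upwards [self_mem_nhdsWithin] with t (ht : 0 < t)
  have := hsym (t • u)
  rw [norm_smul, Real.norm_of_nonneg ht.le] at this
  rw [smul_neg, ← sub_eq_add_neg, ← add_div, div_le_iff₀ ht]
  change _ ≤ ‖u‖ * ρ (t * ‖u‖) * t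
  nlinarith

lemma ConvexOn.differentiableAt_of_second_diff_le (hF : ConvexOn ℝ univ F) {Λ : ℝ}
    (hlip : ∀ h, F (x + h) ≤ F x + Λ * ‖h‖)
    (hsym : ∀ h, F (x + h) + F (x - h) ≤ 2 * F x + ‖h‖ * ρ ‖h‖)
    (hρ : Tendsto ρ (𝓝[≥] 0) (𝓝 0)) : DifferentiableAt ℝ F x := by
  set D := rightLineDeriv F x
  have hle : ∀ u, D u ≤ F (x + u) - F x := hF.rightLineDeriv_le_sub x
  have hD0 : D 0 = 0 := by simp [D, rightLineDeriv]
  have hadd := map_add_of_midpoint_le hD0 (hF.rightLineDeriv_midpoint_le x)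
    (hF.rightLineDeriv_add_neg_le hsym hρ)
  have hneg : ∀ h, D (-h) = -D h := fun h => by
    have := hadd h (-h)
    rw [add_neg_cancel, hD0] at this
    linarith
  have hbound : ∀ h, ‖D h‖ ≤ Λ * ‖h‖ := fun h => by
    have h1 := hle (-h)
    have h2 := hlip (-h)
    rw [hneg] at h1
    rw [norm_neg] at h2
    rw [Real.norm_eq_abs, abs_le]
    constructor <;> linarith [hle h, hlip h]
  let ℓ : E →+ ℝ := AddMonoidHom.mk' D hadd
  refine ⟨ℓ.toRealLinearMap (AddMonoidHomClass.continuous_of_bound ℓ Λ hbound),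
    hasFDerivAt_iff_isLittleO_nhds_zero.2 (Asymptotics.isLittleO_iff.2 fun c hc => ?_)⟩
  have hnorm : Tendsto (fun h : E => ‖h‖) (𝓝 0) (𝓝[≥] 0) :=
    tendsto_nhdsWithin_iff.2 ⟨tendsto_norm_zero, Eventually.of_forall norm_nonneg⟩
  filter_upwards [(hρ.comp hnorm).eventually (Iic_mem_nhds hc)] with h (hh : ρ ‖h‖ ≤ c)
  -- `0 ≤ F (x + h) - F x - D h ≤ F (x + h) + F (x - h) - 2 * F x`
  have h1 := hle (-h)
  rw [hneg, ← sub_eq_add_neg] at h1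
  have h2 : ‖h‖ * ρ ‖h‖ ≤ c * ‖h‖ := by
    rw [mul_comm]
    exact mul_le_mul_of_nonneg_right hh (norm_nonneg h)
  change ‖F (x + h) - F x - D h‖ ≤ c * ‖h‖
  rw [Real.norm_of_nonneg (by linarith [hle h])]
  linarith [hsym h]

lemma ConvexOn.fderiv_le_sub (hF : ConvexOn ℝ univ F) (hd : DifferentiableAt ℝ F x) (h : E) :
    fderiv ℝ F x h ≤ F (x + h) - F x := by
  have hline : HasDerivAt (fun t : ℝ => F (x + t • h)) (fderiv ℝ F x h) 0 := by
    refine hd.hasFDerivAt.comp_hasDerivAt_of_eq 0 ?_ (by simp)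
    simpa using ((hasDerivAt_id (0 : ℝ)).smul_const h).const_add x
  simpa [slope_def_field] using
    (hF.comp_line x h).le_slope_of_hasDerivAt (mem_univ 0) (mem_univ 1) one_pos hline

lemma fderiv_eq_of_forall_add_le (hd : DifferentiableAt ℝ F x) (ℓ : E →L[ℝ] ℝ)
    (h : ∀ y, F x + ℓ (y - x) ≤ F y) : fderiv ℝ F x = ℓ := by
  have hmin : IsLocalMin (fun y => F y - ℓ y) x :=
    Eventually.of_forall fun y => by linarith [h y, ℓ.map_sub y x]
  exact sub_eq_zero.1 (hmin.hasFDerivAt_eq_zero (hd.hasFDerivAt.sub ℓ.hasFDerivAt))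

lemma ConvexOn.norm_fderiv_sub_le (hF : ConvexOn ℝ univ F) (hd : Differentiable ℝ F)
    (hsym : ∀ x h, F (x + h) + F (x - h) ≤ 2 * F x + ‖h‖ * ρ ‖h‖)
    (hρ0 : ∀ t, 0 ≤ t → 0 ≤ ρ t) (x z : E) :
    ‖fderiv ℝ F x - fderiv ℝ F z‖ ≤ 2 * ρ ‖x - z‖ := by
  have hup : ∀ y h, F (y + h) - F y ≤ fderiv ℝ F y h + ‖h‖ * ρ ‖h‖ := fun y h => by
    have := hF.fderiv_le_sub (hd y) (-h)
    rw [map_neg, ← sub_eq_add_neg] at this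
    linarith [hsym y h]
  have hρt := hρ0 _ (norm_nonneg (x - z))
  rcases (norm_nonneg (x - z)).eq_or_lt with ht | ht
  · obtain rfl := norm_sub_eq_zero_iff.1 ht.symm
    simpa using hρt
  set t := ‖x - z‖
  -- compare the tangent planes at `x` and `z` at the point `z + t • e`
  have key : ∀ e : E, ‖e‖ = 1 → (fderiv ℝ F x - fderiv ℝ F z) e ≤ 2 * ρ t := by
    intro e he
    have hte : ‖t • e‖ = t := by rw [norm_smul, he, mul_one, Real.norm_of_nonneg ht.le]
    have h1 := hF.fderiv_le_sub (hd x) (z - x + t • e)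
    have h2 := hup x (z - x)
    have h3 := hup z (t • e)
    rw [show x + (z - x + t • e) = z + t • e by abel, map_add, map_smul, smul_eq_mul] at h1
    rw [add_sub_cancel, norm_sub_rev] at h2
    rw [hte, map_smul, smul_eq_mul] at h3
    change fderiv ℝ F x e - fderiv ℝ F z e ≤ _
    refine le_of_mul_le_mul_left ?_ ht
    linarith
  refine ContinuousLinearMap.opNorm_le_of_unit_norm (by linarith) fun e he => ?_
  rw [Real.norm_eq_abs, abs_le]
  have := key (-e) (by rw [norm_neg, he])
  rw [map_neg] at this
  exact ⟨by linarith, key e he⟩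

end SecondDifference

section TaylorGap

variable {X : Type*} [NormedAddCommGroup X] [InnerProductSpace ℝ X]

def taylorGap (f : X → ℝ) (G : X → X) (x y : X) : ℝ := f x - f y - ⟪G y, x - y⟫

noncomputable def gapProfile (B : Set X) (f : X → ℝ) (G : X → X) (r : ℝ) : ℝ :=
  ⨆ p : B × B, (‖G p.1 - G p.2‖ - taylorGap f G p.1 p.2 / r)

variable {B : Set X} {f : X → ℝ} {G : X → X} {L : ℝ}

lemma exists_pos_forall_taylorGap_lt (hgap : ∀ x ∈ B, ∀ y ∈ B, 0 ≤ taylorGap f G x y)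
    (hSCW1 : ∀ x y : ℕ → X, (∀ n, x n ∈ B) → (∀ n, y n ∈ B) →
      Tendsto (fun n => taylorGap f G (x n) (y n)) atTop (𝓝 0) →
      Tendsto (fun n => G (x n) - G (y n)) atTop (𝓝 0))
    {ε : ℝ} (hε : 0 < ε) :
    ∃ δ > 0, ∀ x ∈ B, ∀ y ∈ B, taylorGap f G x y < δ → ‖G x - G y‖ < ε := by
  by_contra! h
  choose x hx y hy hsmall hlarge using fun n : ℕ => h (1 / (n + 1)) Nat.one_div_pos_of_nat
  have hgap0 : Tendsto (fun n => taylorGap f G (x n) (y n)) atTop (𝓝 0) :=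
    squeeze_zero (fun n => hgap _ (hx n) _ (hy n)) (fun n => (hsmall n).le)
      tendsto_one_div_add_atTop_nhds_zero_nat
  obtain ⟨n, hn⟩ :=
    ((hSCW1 x y hx hy hgap0).norm.eventually (gt_mem_nhds (by simpa using hε))).exists
  exact (hlarge n).not_gt (by simpa using hn)

lemma norm_sub_sub_taylorGap_div_le (hgap : ∀ x ∈ B, ∀ y ∈ B, 0 ≤ taylorGap f G x y)
    (hGL : ∀ z ∈ B, ‖G z‖ ≤ L) {x y : X} (hx : x ∈ B) (hy : y ∈ B) {r : ℝ} (hr : 0 < r) :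
    ‖G x - G y‖ - taylorGap f G x y / r ≤ 2 * L := by
  have := div_nonneg (hgap x hx y hy) hr.le
  linarith [norm_sub_le (G x) (G y), hGL x hx, hGL y hy]

lemma le_gapProfile (hgap : ∀ x ∈ B, ∀ y ∈ B, 0 ≤ taylorGap f G x y)
    (hGL : ∀ z ∈ B, ‖G z‖ ≤ L) {x y : X} (hx : x ∈ B) (hy : y ∈ B) {r : ℝ} (hr : 0 < r) :
    ‖G x - G y‖ - taylorGap f G x y / r ≤ gapProfile B f G r :=
  le_ciSup (f := fun p : B × B => ‖G p.1 - G p.2‖ - taylorGap f G p.1 p.2 / r)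
    ⟨2 * L, forall_mem_range.2 fun p => norm_sub_sub_taylorGap_div_le hgap hGL p.1.2 p.2.2 hr⟩
    (⟨x, hx⟩, ⟨y, hy⟩)

lemma gapProfile_le (hgap : ∀ x ∈ B, ∀ y ∈ B, 0 ≤ taylorGap f G x y)
    (hGL : ∀ z ∈ B, ‖G z‖ ≤ L) (hL : 0 ≤ L) {r : ℝ} (hr : 0 < r) :
    gapProfile B f G r ≤ 2 * L :=
  Real.iSup_le (fun p => norm_sub_sub_taylorGap_div_le hgap hGL p.1.2 p.2.2 hr) (by linarith)

lemma exists_pos_forall_gapProfile_le (hgap : ∀ x ∈ B, ∀ y ∈ B, 0 ≤ taylorGap f G x y)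
    (hSCW1 : ∀ x y : ℕ → X, (∀ n, x n ∈ B) → (∀ n, y n ∈ B) →
      Tendsto (fun n => taylorGap f G (x n) (y n)) atTop (𝓝 0) →
      Tendsto (fun n => G (x n) - G (y n)) atTop (𝓝 0))
    (hGL : ∀ z ∈ B, ‖G z‖ ≤ L) (hL : 0 ≤ L) {ε : ℝ} (hε : 0 < ε) :
    ∃ δ > 0, ∀ r, 0 < r → r ≤ δ → gapProfile B f G r ≤ ε := by
  obtain ⟨δ, hδ, hG⟩ := exists_pos_forall_taylorGap_lt hgap hSCW1 hε
  refine ⟨δ / (2 * L + 1), by positivity, fun r hr hrδ => Real.iSup_le ?_ hε.le⟩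
  rintro ⟨⟨x, hx⟩, ⟨y, hy⟩⟩
  have hdiv := div_nonneg (hgap x hx y hy) hr.le
  rcases lt_or_ge (taylorGap f G x y) δ with hlt | hge
  · linarith [hG x hx y hy hlt]
  · -- a gap of size `δ` seen at scale `r ≤ δ / (2L + 1)` outweighs any jump of `G`
    have : 2 * L + 1 ≤ taylorGap f G x y / r := by
      rw [le_div_iff₀ hr]
      rw [le_div_iff₀ (by positivity)] at hrδ
      linarith
    linarith [norm_sub_le (G x) (G y), hGL x hx, hGL y hy]

end TaylorGap

section TangentInf

variable {X : Type*} [NormedAddCommGroup X] [InnerProductSpace ℝ X]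

noncomputable def tangentInf (B : Set X) (f : X → ℝ) (G : X → X) (P : ℝ → ℝ) (x : X) : ℝ :=
  ⨅ y : B, f y + ⟪G y, x - y⟫ + P ‖x - y‖

variable {B : Set X} {f : X → ℝ} {G : X → X} {P : ℝ → ℝ} {L : ℝ}

lemma tangent_le_tangent_add (hgap : ∀ x ∈ B, ∀ y ∈ B, 0 ≤ taylorGap f G x y)
    (hGL : ∀ z ∈ B, ‖G z‖ ≤ L) (hP : ∀ r, 0 ≤ r → r * gapProfile B f G r ≤ P r)
    {y z : X} (hy : y ∈ B) (hz : z ∈ B) (x : X) :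
    f z + ⟪G z, x - z⟫ ≤ f y + ⟪G y, x - y⟫ + P ‖x - y‖ := by
  have hsplit : f z + ⟪G z, x - z⟫
      = f y + ⟪G y, x - y⟫ - taylorGap f G y z + ⟪G z - G y, x - y⟫ := by
    rw [taylorGap, inner_sub_left, show x - z = (x - y) + (y - z) by abel, inner_add_right]
    ring
  have hcs : ⟪G z - G y, x - y⟫ ≤ ‖G y - G z‖ * ‖x - y‖ := by
    rw [norm_sub_rev]
    exact real_inner_le_norm _ _
  have hgap_yz := hgap y hy z hz
  have hr := hP _ (norm_nonneg (x - y))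
  rcases (norm_nonneg (x - y)).eq_or_lt with h0 | hpos
  · rw [← h0, zero_mul] at hr
    rw [← h0, mul_zero] at hcs
    rw [← h0]
    linarith
  have hprof := le_gapProfile hgap hGL hy hz hpos
  rw [sub_le_iff_le_add, ← sub_le_iff_le_add', ← mul_le_mul_iff_of_pos_left hpos, mul_sub,
    mul_div_cancel₀ _ hpos.ne'] at hprof
  nlinarith

lemma bddBelow_range_tangent (hgap : ∀ x ∈ B, ∀ y ∈ B, 0 ≤ taylorGap f G x y)
    (hGL : ∀ z ∈ B, ‖G z‖ ≤ L) (hP : ∀ r, 0 ≤ r → r * gapProfile B f G r ≤ P r)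
    {z : X} (hz : z ∈ B) (x : X) :
    BddBelow (range fun y : B => f y + ⟪G y, x - y⟫ + P ‖x - y‖) :=
  ⟨_, forall_mem_range.2 fun y => tangent_le_tangent_add hgap hGL hP y.2 hz x⟩

lemma tangentInf_le (hgap : ∀ x ∈ B, ∀ y ∈ B, 0 ≤ taylorGap f G x y)
    (hGL : ∀ z ∈ B, ‖G z‖ ≤ L) (hP : ∀ r, 0 ≤ r → r * gapProfile B f G r ≤ P r)
    {y : X} (hy : y ∈ B) (x : X) :
    tangentInf B f G P x ≤ f y + ⟪G y, x - y⟫ + P ‖x - y‖ :=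
  ciInf_le (bddBelow_range_tangent hgap hGL hP hy x) ⟨y, hy⟩

lemma tangent_le_tangentInf (hgap : ∀ x ∈ B, ∀ y ∈ B, 0 ≤ taylorGap f G x y)
    (hGL : ∀ z ∈ B, ‖G z‖ ≤ L) (hP : ∀ r, 0 ≤ r → r * gapProfile B f G r ≤ P r)
    {z : X} (hz : z ∈ B) (x : X) :
    f z + ⟪G z, x - z⟫ ≤ tangentInf B f G P x :=
  have : Nonempty B := ⟨⟨z, hz⟩⟩
  le_ciInf fun y => tangent_le_tangent_add hgap hGL hP y.2 hz x

lemma tangentInf_add_add_le (hgap : ∀ x ∈ B, ∀ y ∈ B, 0 ≤ taylorGap f G x y)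
    (hGL : ∀ z ∈ B, ‖G z‖ ≤ L) (hP : ∀ r, 0 ≤ r → r * gapProfile B f G r ≤ P r)
    (hne : B.Nonempty) {h : X} {c : ℝ} (hPh : ∀ u, P ‖u + h‖ + P ‖u - h‖ ≤ 2 * P ‖u‖ + c)
    (x : X) :
    tangentInf B f G P (x + h) + tangentInf B f G P (x - h) ≤ 2 * tangentInf B f G P x + c := by
  have : Nonempty B := hne.to_subtype
  suffices (tangentInf B f G P (x + h) + tangentInf B f G P (x - h) - c) / 2
      ≤ tangentInf B f G P x by linarith
  refine le_ciInf fun y => ?_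
  have h1 := tangentInf_le hgap hGL hP y.2 (x + h)
  have h2 := tangentInf_le hgap hGL hP y.2 (x - h)
  rw [show x + h - y = x - y + h by abel] at h1
  rw [show x - h - y = x - y - h by abel] at h2
  have hinner : ⟪G y, x - y + h⟫ + ⟪G y, x - y - h⟫ = 2 * ⟪G y, x - y⟫ := by
    rw [← inner_add_right, show x - y + h + (x - y - h) = (2 : ℝ) • (x - y) by module,
      real_inner_smul_right]
  linarith [hPh (x - y)]

lemma tangentInf_add_le (hgap : ∀ x ∈ B, ∀ y ∈ B, 0 ≤ taylorGap f G x y)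
    (hGL : ∀ z ∈ B, ‖G z‖ ≤ L) (hP : ∀ r, 0 ≤ r → r * gapProfile B f G r ≤ P r)
    (hne : B.Nonempty) {K : ℝ} (hK : 0 ≤ K)
    (hPK : ∀ a b, 0 ≤ a → 0 ≤ b → P b - P a ≤ K * |b - a|) (x h : X) :
    tangentInf B f G P (x + h) ≤ tangentInf B f G P x + (L + K) * ‖h‖ := by
  have : Nonempty B := hne.to_subtype
  suffices tangentInf B f G P (x + h) - (L + K) * ‖h‖ ≤ tangentInf B f G P x by linarith
  refine le_ciInf fun y => ?_
  have h1 := tangentInf_le hgap hGL hP y.2 (x + h)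
  rw [show x + h - y = x - y + h by abel, inner_add_right] at h1
  have hG : ⟪G y, h⟫ ≤ L * ‖h‖ :=
    (real_inner_le_norm _ _).trans (mul_le_mul_of_nonneg_right (hGL y y.2) (norm_nonneg h))
  have hPy : P ‖x - y + h‖ - P ‖x - y‖ ≤ K * ‖h‖ := by
    refine (hPK _ _ (norm_nonneg _) (norm_nonneg _)).trans (mul_le_mul_of_nonneg_left ?_ hK)
    simpa using abs_norm_sub_norm_le (x - y + h) (x - y)
  linarith

end TangentInf

section Extension

variable {X : Type*} [NormedAddCommGroup X] [InnerProductSpace ℝ X]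
variable {B : Set X} {f : X → ℝ} {G : X → X} {L : ℝ}

lemma convexOn_tangent (f : X → ℝ) (G : X → X) (z : X) :
    ConvexOn ℝ univ fun x => f z + ⟪G z, x - z⟫ := by
  refine (((innerₛₗ ℝ (G z)).convexOn convex_univ).add_const (f z - ⟪G z, z⟫)).congr ?_
  intro x _
  simp [inner_sub_right]
  ring

lemma exists_convexOn_extension (hgap : ∀ x ∈ B, ∀ y ∈ B, 0 ≤ taylorGap f G x y)
    (hGL : ∀ z ∈ B, ‖G z‖ ≤ L) (hne : B.Nonempty) {ω : ℝ → ℝ} (hω : IsConcaveModulus ω)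
    {K : ℝ} (hωK : ∀ t, 0 ≤ t → ω t ≤ K) (hprof : ∀ r, 0 < r → 2 * gapProfile B f G r ≤ ω r) :
    ∃ F : X → ℝ, ConvexOn ℝ univ F ∧ (∀ x ∈ B, F x = f x) ∧
      (∀ z ∈ B, ∀ x, f z + ⟪G z, x - z⟫ ≤ F x) ∧
      (∀ x h, F (x + h) + F (x - h) ≤ 2 * F x + ‖h‖ * (4 * ω ‖h‖)) ∧
      ∀ x h, F (x + h) ≤ F x + (L + K) * ‖h‖ := by
  set P := modulusPrimitive ω
  have hP0 : P 0 = 0 := by simp [P, modulusPrimitive]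
  have hP : ∀ r, 0 ≤ r → r * gapProfile B f G r ≤ P r := fun r hr => by
    rcases hr.eq_or_lt with rfl | hr
    · simp [hP0]
    nlinarith [hprof r hr, hω.mul_le_two_mul_primitive hr.le]
  have hK : 0 ≤ K := (hω.nonneg 0 le_rfl).trans (hωK 0 le_rfl)
  have hminor : ∀ z ∈ B, (fun x => f z + ⟪G z, x - z⟫) ≤ tangentInf B f G P :=
    fun z hz => tangent_le_tangentInf hgap hGL hP hz
  have hg : ∃ φ, ConvexOn ℝ univ φ ∧ φ ≤ tangentInf B f G P :=
    let ⟨z, hz⟩ := hne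
    ⟨_, convexOn_tangent f G z, hminor z hz⟩
  refine ⟨convexEnvelope (tangentInf B f G P), convexOn_convexEnvelope hg, fun x hx => ?_,
    fun z hz => le_convexEnvelope (convexOn_tangent f G z) (hminor z hz),
    fun x h => convexEnvelope_add_add_le hg (tangentInf_add_add_le hgap hGL hP hne
      fun u => hω.primitive_norm_add_add_norm_sub_le u h) x,
    fun x h => convexEnvelope_add_le hg (fun x => tangentInf_add_le hgap hGL hP hne hK
      (fun a b ha hb => hω.primitive_sub_le hωK ha hb) x h) x⟩
  refine le_antisymm ((convexEnvelope_le hg x).trans ?_) ?_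
  · simpa [hP0] using tangentInf_le hgap hGL hP hx x
  · simpa using le_convexEnvelope (convexOn_tangent f G x) (hminor x hx) x

end Extension

theorem convex_C1omega_extension_of_C_and_SCW1_general
    {X : Type*} [NormedAddCommGroup X] [InnerProductSpace ℝ X] [CompleteSpace X]
    (B : Set X)
    (f : X → ℝ) (G : X → X) (hGbd : ∃ M : ℝ, ∀ z ∈ B, ‖G z‖ ≤ M)
    (hC : ∀ x ∈ B, ∀ y ∈ B, f x ≥ f y + ⟪G y, x - y⟫)
    (hSCW1 : ∀ x y : ℕ → X, (∀ n, x n ∈ B) → (∀ n, y n ∈ B) →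
      Tendsto (fun n => f (x n) - f (y n) - ⟪G (y n), x n - y n⟫) atTop (nhds 0) →
      Tendsto (fun n => G (x n) - G (y n)) atTop (nhds 0)) :
    ∃ (ω : ℝ → ℝ) (M : ℝ) (F : X → ℝ),
      ConcaveOn ℝ (Ici 0) ω ∧ MonotoneOn ω (Ici 0) ∧ ContinuousOn ω (Ici 0) ∧
      ω 0 = 0 ∧ (∀ t, 0 ≤ t → 0 ≤ ω t) ∧ 0 < M ∧
      ConvexOn ℝ univ F ∧ Differentiable ℝ F ∧
      (∀ x ∈ B, F x = f x) ∧ (∀ x ∈ B, gradient F x = G x) ∧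
      (∀ x z : X, ‖gradient F x - gradient F z‖ ≤ M * ω ‖x - z‖) := by
  rcases B.eq_empty_or_nonempty with rfl | hne
  · exact ⟨fun _ => 0, 1, fun _ => 0, concaveOn_const 0 (convex_Ici 0), monotoneOn_const,
      continuousOn_const, rfl, fun _ _ => le_rfl, one_pos, convexOn_const 0 convex_univ,
      differentiable_const 0, by simp, by simp, fun x z => by simp⟩
  obtain ⟨M, hM⟩ := hGbd
  have hL : 0 ≤ max M 0 := le_max_right M 0
  have hGL : ∀ z ∈ B, ‖G z‖ ≤ max M 0 := fun z hz => (hM z hz).trans (le_max_left M 0)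
  have hgap : ∀ x ∈ B, ∀ y ∈ B, 0 ≤ taylorGap f G x y := fun x hx y hy => by
    rw [taylorGap]
    linarith [hC x hx y hy]
  obtain ⟨ω, hω, hωK, hprof⟩ := exists_isConcaveModulus_ge (θ := fun r => 2 * gapProfile B f G r)
    (by positivity : 0 ≤ 4 * max M 0) (fun r hr => by linarith [gapProfile_le hgap hGL hL hr])
    fun ε hε => by
      obtain ⟨δ, hδ, h⟩ := exists_pos_forall_gapProfile_le hgap hSCW1 hGL hL (half_pos hε)
      exact ⟨δ, hδ, fun r hr hrδ => by linarith [h r hr hrδ]⟩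
  obtain ⟨F, hF, hFB, hFtangent, hFsym, hFlip⟩ :=
    exists_convexOn_extension hgap hGL hne hω hωK hprof
  have hFd : Differentiable ℝ F := fun x =>
    hF.differentiableAt_of_second_diff_le (hFlip x) (hFsym x)
      (by simpa using hω.tendsto_nhdsGE_zero.const_mul 4)
  refine ⟨ω, 8, F, hω.concaveOn, hω.monotoneOn, hω.continuousOn, hω.map_zero, hω.nonneg,
    by norm_num, hF, hFd, hFB, fun x hx => ?_, fun x z => ?_⟩
  · rw [gradient, fderiv_eq_of_forall_add_le (hFd x) (InnerProductSpace.toDual ℝ X (G x))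
      fun y => by simpa [hFB x hx] using hFtangent x hx y, LinearIsometryEquiv.symm_apply_apply]
  · rw [gradient, gradient, ← map_sub, LinearIsometryEquiv.norm_map]
    linarith [hF.norm_fderiv_sub_le (ρ := fun t => 4 * ω t) hFd hFsym
      (fun t ht => by linarith [hω.nonneg t ht]) x z]

/-- sufficiency of (C) and (SCW¹): existence of a convex C^{1,ω} extension. -/
theorem convex_C1omega_extension_of_C_and_SCW1
    {X : Type*} [NormedAddCommGroup X] [InnerProductSpace ℝ X] [CompleteSpace X]
    (B : Set X) (hB : Bornology.IsBounded B)
    (f : X → ℝ) (G : X → X) (hGbd : ∃ M : ℝ, ∀ z ∈ B, ‖G z‖ ≤ M)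
    (hC : ∀ x ∈ B, ∀ y ∈ B, f x ≥ f y + ⟪G y, x - y⟫)
    (hSCW1 : ∀ x y : ℕ → X, (∀ n, x n ∈ B) → (∀ n, y n ∈ B) →
      Tendsto (fun n => f (x n) - f (y n) - ⟪G (y n), x n - y n⟫) atTop (nhds 0) →
      Tendsto (fun n => G (x n) - G (y n)) atTop (nhds 0)) :
    ∃ (ω : ℝ → ℝ) (M : ℝ) (F : X → ℝ),
      ConcaveOn ℝ (Ici 0) ω ∧ MonotoneOn ω (Ici 0) ∧ ContinuousOn ω (Ici 0) ∧
      ω 0 = 0 ∧ (∀ t, 0 ≤ t → 0 ≤ ω t) ∧ 0 < M ∧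
      ConvexOn ℝ univ F ∧ Differentiable ℝ F ∧
      (∀ x ∈ B, F x = f x) ∧ (∀ x ∈ B, gradient F x = G x) ∧
      (∀ x z : X, ‖gradient F x - gradient F z‖ ≤ M * ω ‖x - z‖) :=
  convex_C1omega_extension_of_C_and_SCW1_general B f G hGbd hC hSCW1
end
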